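/- arXiv:1907.06635 — 15 statements merged into one kernel-verified Lean document; each statement's English description precedes it below -/
import Mathlib

section
/- A groupoid (Q,·) is a pentagonal quasigroup if and only if there exists an Abelian group structure (Q,+) and an automorphism φ of (Q,+) with no nonzero fixed points such that x·y = φ(x) + y − φ(y) for all x,y and φ⁴ − φ³ + φ² − φ + id = 0. -/
/-!
Fixing an idempotent `e`, Toyoda's construction turns a medial quasigroup into an abelian group
with neutral element `e`: `x + y = (x / e) · (e \ y)`. Its right and left translations by `e`
become commuting automorphisms `φ`, `ψ` with `x · y = φ x + ψ y`, and idempotency forces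
`ψ = id - φ`. For an operation of this affine form, the pentagonal word in `x, y` equals
`y + p(φ)(x - y)` with `p(t) = t⁴ - t³ + t² - t + 1`; so the pentagonal identity is exactly
`p(φ) = 0`. Conversely, `p(φ) = 0` makes `id - φ` invertible, with inverse `φ³ + φ`, which is
what solvability of left division needs; it also rules out nonzero fixed points, since `p(1) = 1`.
-/

/-- A pentagonal quasigroup: a quasigroup (unique left/right division)
satisfying idempotency, mediality and the pentagonal identity. -/
def IsPentagonal {Q : Type*} (m : Q → Q → Q) : Prop :=
  (∀ a b : Q, ∃! x, m a x = b) ∧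
  (∀ a b : Q, ∃! x, m x a = b) ∧
  (∀ x, m x x = x) ∧
  (∀ x y z u, m (m x y) (m z u) = m (m x z) (m y u)) ∧
  (∀ x y, m (m (m (m x y) x) y) x = y)

structure IsMedialQuasigroup {Q : Type*} (m : Q → Q → Q) : Prop where
  bijective_left : ∀ a, Function.Bijective (m a)
  bijective_right : ∀ a, Function.Bijective (fun x => m x a)
  medial : ∀ x y z u, m (m x y) (m z u) = m (m x z) (m y u)

namespace IsMedialQuasigroup

variable {Q : Type*} {m : Q → Q → Q}

lemma of_existsUnique (hL : ∀ a b : Q, ∃! x, m a x = b) (hR : ∀ a b : Q, ∃! x, m x a = b)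
    (hmed : ∀ x y z u, m (m x y) (m z u) = m (m x z) (m y u)) : IsMedialQuasigroup m where
  bijective_left a := (Function.bijective_iff_existsUnique _).2 (hL a)
  bijective_right a := (Function.bijective_iff_existsUnique _).2 (hR a)
  medial := hmed

variable (hQ : IsMedialQuasigroup m)

noncomputable def leftMul (a : Q) : Q ≃ Q := Equiv.ofBijective _ (hQ.bijective_left a)

noncomputable def rightMul (a : Q) : Q ≃ Q := Equiv.ofBijective _ (hQ.bijective_right a)

@[simp]
lemma leftMul_apply (a x : Q) : hQ.leftMul a x = m a x := rfl

@[simp]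
lemma rightMul_apply (a x : Q) : hQ.rightMul a x = m x a := rfl

lemma mul_rightMul_symm_apply (a x : Q) : m ((hQ.rightMul a).symm x) a = x :=
  (hQ.rightMul a).apply_symm_apply x

lemma mul_leftMul_symm_apply (a x : Q) : m a ((hQ.leftMul a).symm x) = x :=
  (hQ.leftMul a).apply_symm_apply x

variable {e : Q}

lemma rightMul_symm_idem (he : m e e = e) : (hQ.rightMul e).symm e = e :=
  (Equiv.symm_apply_eq _).2 he.symm

lemma rightMul_mul (he : m e e = e) (x y : Q) :
    hQ.rightMul e (m x y) = m (hQ.rightMul e x) (hQ.rightMul e y) := by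
  simpa [he] using hQ.medial x y e e

lemma leftMul_mul (he : m e e = e) (x y : Q) :
    hQ.leftMul e (m x y) = m (hQ.leftMul e x) (hQ.leftMul e y) := by
  simpa [he] using hQ.medial e e x y

lemma rightMul_leftMul_comm (he : m e e = e) (x : Q) :
    hQ.rightMul e (hQ.leftMul e x) = hQ.leftMul e (hQ.rightMul e x) := by
  simpa [he] using hQ.medial e x e e

lemma leftMul_symm_rightMul (he : m e e = e) (x : Q) :
    (hQ.leftMul e).symm (hQ.rightMul e x) = hQ.rightMul e ((hQ.leftMul e).symm x) := by
  rw [Equiv.symm_apply_eq, ← hQ.rightMul_leftMul_comm he, Equiv.apply_symm_apply]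

lemma rightMul_symm_leftMul_symm (he : m e e = e) (x : Q) :
    (hQ.rightMul e).symm ((hQ.leftMul e).symm x) =
      (hQ.leftMul e).symm ((hQ.rightMul e).symm x) := by
  rw [Equiv.symm_apply_eq, ← hQ.leftMul_symm_rightMul he, Equiv.apply_symm_apply]

lemma rightMul_symm_mul (he : m e e = e) (x y : Q) :
    (hQ.rightMul e).symm (m x y) = m ((hQ.rightMul e).symm x) ((hQ.rightMul e).symm y) := by
  rw [Equiv.symm_apply_eq, hQ.rightMul_mul he, Equiv.apply_symm_apply, Equiv.apply_symm_apply]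

lemma leftMul_symm_mul (he : m e e = e) (x y : Q) :
    (hQ.leftMul e).symm (m x y) = m ((hQ.leftMul e).symm x) ((hQ.leftMul e).symm y) := by
  rw [Equiv.symm_apply_eq, hQ.leftMul_mul he, Equiv.apply_symm_apply, Equiv.apply_symm_apply]

noncomputable def toyodaAdd (e x y : Q) : Q := m ((hQ.rightMul e).symm x) ((hQ.leftMul e).symm y)

noncomputable def toyodaNeg (e x : Q) : Q :=
  hQ.rightMul e ((hQ.rightMul ((hQ.leftMul e).symm x)).symm e)

lemma toyodaAdd_rightMul_leftMul (x y : Q) : hQ.toyodaAdd e (m x e) (m e y) = m x y := by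
  rw [toyodaAdd, ← hQ.rightMul_apply e x, ← hQ.leftMul_apply e y, Equiv.symm_apply_apply,
    Equiv.symm_apply_apply]

lemma toyodaAdd_assoc (he : m e e = e) (x y z : Q) :
    hQ.toyodaAdd e (hQ.toyodaAdd e x y) z = hQ.toyodaAdd e x (hQ.toyodaAdd e y z) := by
  set R := hQ.rightMul e
  set L := hQ.leftMul e
  calc m (R.symm (m (R.symm x) (L.symm y))) (L.symm z)
      = m (m (R.symm (R.symm x)) (R.symm (L.symm y))) (m e (L.symm (L.symm z))) := by
        rw [hQ.rightMul_symm_mul he, hQ.mul_leftMul_symm_apply]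
    _ = m (m (R.symm (R.symm x)) e) (m (L.symm (R.symm y)) (L.symm (L.symm z))) := by
        rw [hQ.medial, hQ.rightMul_symm_leftMul_symm he]
    _ = m (R.symm x) (L.symm (m (R.symm y) (L.symm z))) := by
        rw [hQ.leftMul_symm_mul he, hQ.mul_rightMul_symm_apply]

lemma idem_toyodaAdd (he : m e e = e) (x : Q) : hQ.toyodaAdd e e x = x := by
  rw [toyodaAdd, hQ.rightMul_symm_idem he, hQ.mul_leftMul_symm_apply]

lemma toyodaNeg_toyodaAdd (x : Q) : hQ.toyodaAdd e (hQ.toyodaNeg e x) x = e := by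
  rw [toyodaAdd, toyodaNeg, Equiv.symm_apply_apply, hQ.mul_rightMul_symm_apply]

lemma toyodaAdd_comm (he : m e e = e) (x y : Q) : hQ.toyodaAdd e x y = hQ.toyodaAdd e y x := by
  set R := hQ.rightMul e
  set L := hQ.leftMul e
  calc m (R.symm x) (L.symm y)
      = m (m e (L.symm (R.symm x))) (m (R.symm (L.symm y)) e) := by
        rw [hQ.mul_leftMul_symm_apply, hQ.mul_rightMul_symm_apply]
    _ = m (m e (L.symm (R.symm y))) (R (L.symm (R.symm x))) := by
        rw [hQ.medial, hQ.rightMul_symm_leftMul_symm he, hQ.rightMul_apply]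
    _ = m (R.symm y) (L.symm x) := by
        rw [hQ.mul_leftMul_symm_apply, ← hQ.leftMul_symm_rightMul he, Equiv.apply_symm_apply]

noncomputable abbrev toyodaAddCommGroup (he : m e e = e) : AddCommGroup Q :=
  letI : Add Q := ⟨hQ.toyodaAdd e⟩
  letI : Zero Q := ⟨e⟩
  letI : Neg Q := ⟨hQ.toyodaNeg e⟩
  { AddGroup.ofLeftAxioms (hQ.toyodaAdd_assoc he) (hQ.idem_toyodaAdd he)
      hQ.toyodaNeg_toyodaAdd with
    add_comm := hQ.toyodaAdd_comm he }

lemma rightMul_toyodaAdd (he : m e e = e) (x y : Q) :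
    hQ.rightMul e (hQ.toyodaAdd e x y) =
      hQ.toyodaAdd e (hQ.rightMul e x) (hQ.rightMul e y) := by
  rw [toyodaAdd, toyodaAdd, hQ.rightMul_mul he, hQ.leftMul_symm_rightMul he,
    Equiv.apply_symm_apply, Equiv.symm_apply_apply]

end IsMedialQuasigroup

theorem IsMedialQuasigroup.exists_addCommGroup_affine {Q : Type*} [Nonempty Q] {m : Q → Q → Q}
    (hQ : IsMedialQuasigroup m) (hidem : ∀ x, m x x = x) :
    ∃ (_ : AddCommGroup Q) (φ : Q →+ Q),
      Function.Bijective φ ∧ ∀ x y, m x y = φ x + y - φ y := by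
  let e := Classical.arbitrary Q
  let _ := hQ.toyodaAddCommGroup (hidem e)
  let φ : Q →+ Q := AddMonoidHom.mk' (hQ.rightMul e) (hQ.rightMul_toyodaAdd (hidem e))
  have hsplit (x y : Q) : m x y = φ x + m e y := (hQ.toyodaAdd_rightMul_leftMul x y).symm
  have hleft (y : Q) : m e y = y - φ y := eq_sub_of_add_eq' ((hsplit y y).symm.trans (hidem y))
  refine ⟨_, φ, (hQ.rightMul e).bijective, fun x y => ?_⟩
  rw [hsplit, hleft, add_sub_assoc]

section Affine

variable {A : Type*} [AddCommGroup A] (φ : A →+ A)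

def affineMul (x y : A) : A := φ x + y - φ y

def PentagonalPolyVanishes : Prop :=
  ∀ x, φ (φ (φ (φ x))) - φ (φ (φ x)) + φ (φ x) - φ x + x = 0

lemma affineMul_idem (x : A) : affineMul φ x x = x :=
  add_sub_cancel_left (φ x) x

lemma affineMul_medial (x y z u : A) :
    affineMul φ (affineMul φ x y) (affineMul φ z u) =
      affineMul φ (affineMul φ x z) (affineMul φ y u) := by
  simp only [affineMul, map_add, map_sub]
  abel

lemma affineMul_pentagon (x y : A) :
    affineMul φ (affineMul φ (affineMul φ (affineMul φ x y) x) y) x =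
      y + (φ (φ (φ (φ (x - y)))) - φ (φ (φ (x - y))) + φ (φ (x - y)) - φ (x - y) +
        (x - y)) := by
  simp only [affineMul, map_add, map_sub]
  abel

lemma affineMul_pentagon_iff :
    (∀ x y, affineMul φ (affineMul φ (affineMul φ (affineMul φ x y) x) y) x = y) ↔
      PentagonalPolyVanishes φ := by
  simp only [PentagonalPolyVanishes, affineMul_pentagon, add_eq_left]
  refine ⟨fun h x => by simpa using h x 0, fun h x y => h (x - y)⟩

variable {φ}

lemma eq_zero_of_map_eq_self (hp : PentagonalPolyVanishes φ) {x : A} (hx : φ x = x) : x = 0 := by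
  simpa [hx] using hp x

/-- `φ³ + φ` inverts `id - φ` because `(1 - t)(t³ + t) = 1 - p(t)` for the pentagonal `p`. -/
lemma bijective_sub_self (hp : PentagonalPolyVanishes φ) :
    Function.Bijective fun x => x - φ x := by
  refine Function.bijective_iff_has_inverse.2
    ⟨fun x => φ (φ (φ x)) + φ x, fun x => ?_, fun x => ?_⟩
  all_goals
    rw [eq_comm, ← sub_eq_zero, ← hp x]
    simp only [map_add, map_sub]
    abel

lemma bijective_affineMul_left (hp : PentagonalPolyVanishes φ) (a : A) :
    Function.Bijective (affineMul φ a) := by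
  have : affineMul φ a = (φ a + ·) ∘ fun x => x - φ x := funext fun x => add_sub_assoc _ _ _
  exact this ▸ (Equiv.addLeft (φ a)).bijective.comp (bijective_sub_self hp)

lemma bijective_affineMul_right (hφ : Function.Bijective φ) (a : A) :
    Function.Bijective fun x => affineMul φ x a := by
  have : (fun x => affineMul φ x a) = (· + (a - φ a)) ∘ φ :=
    funext fun x => add_sub_assoc _ _ _
  exact this ▸ (Equiv.addRight (a - φ a)).bijective.comp hφ

lemma isPentagonal_affineMul (hφ : Function.Bijective φ) (hp : PentagonalPolyVanishes φ) :
    IsPentagonal (affineMul φ) :=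
  ⟨fun a => (Function.bijective_iff_existsUnique _).1 (bijective_affineMul_left hp a),
    fun a => (Function.bijective_iff_existsUnique _).1 (bijective_affineMul_right hφ a),
    affineMul_idem φ, affineMul_medial φ, (affineMul_pentagon_iff φ).2 hp⟩

end Affine

theorem pentagonal_characterization (Q : Type*) [Nonempty Q] (m : Q → Q → Q) :
    IsPentagonal m ↔
      ∃ (_ : AddCommGroup Q) (φ : Q →+ Q),
        Function.Bijective φ ∧
        (∀ x : Q, φ x = x → x = 0) ∧
        (∀ x y : Q, m x y = φ x + y - φ y) ∧
        (∀ x : Q, φ (φ (φ (φ x))) - φ (φ (φ x)) + φ (φ x) - φ x + x = 0) := by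
  constructor
  · rintro ⟨hL, hR, hidem, hmed, hpent⟩
    obtain ⟨_, φ, hφ, hm⟩ :=
      (IsMedialQuasigroup.of_existsUnique hL hR hmed).exists_addCommGroup_affine hidem
    obtain rfl : m = affineMul φ := funext₂ hm
    have hp := (affineMul_pentagon_iff φ).1 hpent
    exact ⟨_, φ, hφ, fun _ => eq_zero_of_map_eq_self hp, hm, hp⟩
  · rintro ⟨_, φ, hφ, -, hm, hp⟩
    obtain rfl : m = affineMul φ := funext₂ hm
    exact isPentagonal_affineMul hφ hp
end

section
/- If (Q,·) is a pentagonal quasigroup, then there exists an Abelian group (Q,+) and a regular automorphism φ with x·y = φ(x) + y − φ(y), such that either φ⁵ = −id and φ ≠ −id, or φ = −id and the group (Q,+) has exponent 5. -/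
/-!
Fix `e : Q`. In an idempotent medial quasigroup the translations `x ↦ x·e` and `x ↦ e·x` are
commuting automorphisms, so `a + b := (a / e)·(e \ b)` satisfies the interchange law
`(a + b) + (c + d) = (a + c) + (b + d)` and has `e` as neutral element; by Eckmann–Hilton it is an
abelian group, and `x·y = φ x + y − φ y` for `φ x := x·e`. Putting `y = 0` in the pentagonal identity
gives `φ⁴ − φ³ + φ² − φ + 1 = 0`, and multiplying by `φ + 1` gives `φ⁵ = −1`; if `φ = −1` the
quartic reads `5 = 0`.
-/

theorem pow_five_eq_neg_one_of_quartic_eq_zero {R : Type*} [Ring R] {f : R}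
    (hf : f ^ 4 - f ^ 3 + f ^ 2 - f + 1 = 0) : f ^ 5 = -1 := by
  have h : f ^ 5 + 1 = (f + 1) * (f ^ 4 - f ^ 3 + f ^ 2 - f + 1) := by noncomm_ring
  rw [hf, mul_zero] at h
  exact eq_neg_of_add_eq_zero_left h

theorem AddMonoid.End.quartic_eq_zero_of_pentagonal {G : Type*} [AddCommGroup G]
    {m : G → G → G} (φ : AddMonoid.End G) (hm : ∀ x y, m x y = φ x + y - φ y)
    (hpent : ∀ x y, m (m (m (m x y) x) y) x = y) :
    φ ^ 4 - φ ^ 3 + φ ^ 2 - φ + 1 = 0 := by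
  ext x
  have h := hpent x 0
  simp only [hm, map_add, map_sub, map_zero, add_zero, sub_zero] at h
  change φ (φ (φ (φ x))) - φ (φ (φ x)) + φ (φ x) - φ x + x = 0
  rw [← h]
  abel

theorem Equiv.symm_apply_binop {α : Type*} {op : α → α → α} (f : α ≃ α)
    (hf : ∀ x y, f (op x y) = op (f x) (f y)) (x y : α) :
    f.symm (op x y) = op (f.symm x) (f.symm y) :=
  f.injective <| by rw [hf, Equiv.apply_symm_apply, Equiv.apply_symm_apply,
    Equiv.apply_symm_apply]

structure IsIdempotentMedialQuasigroup {Q : Type*} (m : Q → Q → Q) : Prop where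
  existsUnique_left : ∀ a b : Q, ∃! x, m a x = b
  existsUnique_right : ∀ a b : Q, ∃! x, m x a = b
  idem : ∀ x, m x x = x
  medial : ∀ x y z u, m (m x y) (m z u) = m (m x z) (m y u)

theorem IsPentagonal.isIdempotentMedialQuasigroup {Q : Type*} {m : Q → Q → Q}
    (h : IsPentagonal m) : IsIdempotentMedialQuasigroup m :=
  ⟨h.1, h.2.1, h.2.2.1, h.2.2.2.1⟩

namespace IsIdempotentMedialQuasigroup

variable {Q : Type*} {m : Q → Q → Q}

noncomputable def leftMul (hQ : IsIdempotentMedialQuasigroup m) (a : Q) : Equiv.Perm Q :=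
  Equiv.ofBijective (m a) ((Function.bijective_iff_existsUnique _).2 (hQ.existsUnique_left a))

noncomputable def rightMul (hQ : IsIdempotentMedialQuasigroup m) (a : Q) : Equiv.Perm Q :=
  Equiv.ofBijective (m · a) ((Function.bijective_iff_existsUnique _).2 (hQ.existsUnique_right a))

@[simp]
theorem leftMul_apply (hQ : IsIdempotentMedialQuasigroup m) (a x : Q) :
    hQ.leftMul a x = m a x := rfl

@[simp]
theorem rightMul_apply (hQ : IsIdempotentMedialQuasigroup m) (a x : Q) :
    hQ.rightMul a x = m x a := rfl

theorem self_distrib_left (hQ : IsIdempotentMedialQuasigroup m) (a x y : Q) :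
    m a (m x y) = m (m a x) (m a y) := by
  rw [← hQ.medial, hQ.idem]

theorem self_distrib_right (hQ : IsIdempotentMedialQuasigroup m) (a x y : Q) :
    m (m x y) a = m (m x a) (m y a) := by
  rw [hQ.medial, hQ.idem]

theorem commute_leftMul_rightMul (hQ : IsIdempotentMedialQuasigroup m) (a : Q) :
    Commute (hQ.leftMul a) (hQ.rightMul a) :=
  Equiv.ext fun x => show m a (m x a) = m (m a x) a by
    simpa only [hQ.idem] using (hQ.medial a x a a).symm

theorem leftMul_symm_apply_mul (hQ : IsIdempotentMedialQuasigroup m) (a x y : Q) :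
    (hQ.leftMul a).symm (m x y) = m ((hQ.leftMul a).symm x) ((hQ.leftMul a).symm y) :=
  Equiv.symm_apply_binop _ (hQ.self_distrib_left a) x y

theorem rightMul_symm_apply_mul (hQ : IsIdempotentMedialQuasigroup m) (a x y : Q) :
    (hQ.rightMul a).symm (m x y) = m ((hQ.rightMul a).symm x) ((hQ.rightMul a).symm y) :=
  Equiv.symm_apply_binop _ (hQ.self_distrib_right a) x y

theorem rightMul_symm_self (hQ : IsIdempotentMedialQuasigroup m) (a : Q) :
    (hQ.rightMul a).symm a = a :=
  (Equiv.symm_apply_eq _).2 (hQ.idem a).symm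

theorem leftMul_symm_self (hQ : IsIdempotentMedialQuasigroup m) (a : Q) :
    (hQ.leftMul a).symm a = a :=
  (Equiv.symm_apply_eq _).2 (hQ.idem a).symm

noncomputable def add (hQ : IsIdempotentMedialQuasigroup m) (e a b : Q) : Q :=
  m ((hQ.rightMul e).symm a) ((hQ.leftMul e).symm b)

noncomputable def neg (hQ : IsIdempotentMedialQuasigroup m) (e a : Q) : Q :=
  hQ.leftMul e ((hQ.leftMul ((hQ.rightMul e).symm a)).symm e)

theorem add_mul_self_mul (hQ : IsIdempotentMedialQuasigroup m) (e x y : Q) :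
    hQ.add e (m x e) (m e y) = m x y := by
  rw [add, ← rightMul_apply hQ e x, ← leftMul_apply hQ e y, Equiv.symm_apply_apply,
    Equiv.symm_apply_apply]

theorem isUnital_add (hQ : IsIdempotentMedialQuasigroup m) (e : Q) :
    EckmannHilton.IsUnital (hQ.add e) e where
  left_id b := by
    rw [add, rightMul_symm_self, ← leftMul_apply hQ, Equiv.apply_symm_apply]
  right_id a := by
    rw [add, leftMul_symm_self, ← rightMul_apply hQ, Equiv.apply_symm_apply]

theorem add_add_add_comm (hQ : IsIdempotentMedialQuasigroup m) (e a b c d : Q) :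
    hQ.add e (hQ.add e a b) (hQ.add e c d) = hQ.add e (hQ.add e a c) (hQ.add e b d) := by
  have hcomm : ∀ x, (hQ.rightMul e).symm ((hQ.leftMul e).symm x) =
      (hQ.leftMul e).symm ((hQ.rightMul e).symm x) :=
    fun x => DFunLike.congr_fun (hQ.commute_leftMul_rightMul e).inv_inv.eq.symm x
  simp only [add, rightMul_symm_apply_mul, leftMul_symm_apply_mul]
  rw [hQ.medial, hcomm c, hcomm b]

theorem add_neg (hQ : IsIdempotentMedialQuasigroup m) (e a : Q) :
    hQ.add e a (hQ.neg e a) = e := by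
  rw [add, neg, Equiv.symm_apply_apply, ← leftMul_apply hQ, Equiv.apply_symm_apply]

theorem rightMul_add (hQ : IsIdempotentMedialQuasigroup m) (e a b : Q) :
    m (hQ.add e a b) e = hQ.add e (m a e) (m b e) := by
  have hcomm : (hQ.leftMul e).symm (m b e) = m ((hQ.leftMul e).symm b) e :=
    DFunLike.congr_fun (hQ.commute_leftMul_rightMul e).inv_left.eq b
  rw [add, add, hQ.self_distrib_right, ← rightMul_apply hQ e ((hQ.rightMul e).symm a),
    Equiv.apply_symm_apply, ← rightMul_apply hQ e a, Equiv.symm_apply_apply, hcomm]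

@[reducible]
noncomputable def addCommGroup (hQ : IsIdempotentMedialQuasigroup m) (e : Q) :
    AddCommGroup Q :=
  letI : Zero Q := ⟨e⟩
  letI : Add Q := ⟨hQ.add e⟩
  letI : Neg Q := ⟨hQ.neg e⟩
  have add_comm := EckmannHilton.mul_comm (hQ.isUnital_add e) (hQ.isUnital_add e)
    (hQ.add_add_add_comm e)
  { add_assoc := (EckmannHilton.mul_assoc (hQ.isUnital_add e) (hQ.isUnital_add e)
      (hQ.add_add_add_comm e)).assoc
    zero_add := (hQ.isUnital_add e).left_id
    add_zero := (hQ.isUnital_add e).right_id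
    add_comm := add_comm.comm
    neg_add_cancel a := (add_comm.comm _ _).trans (hQ.add_neg e a)
    nsmul := nsmulRec
    zsmul := zsmulRec }

theorem exists_addCommGroup_mul_eq [Nonempty Q] (hQ : IsIdempotentMedialQuasigroup m) :
    ∃ (_ : AddCommGroup Q) (φ : Q →+ Q), Function.Bijective φ ∧ (∀ x, φ x = x → x = 0) ∧
      ∀ x y, m x y = φ x + y - φ y := by
  obtain ⟨e⟩ := ‹Nonempty Q›
  let G := hQ.addCommGroup e
  let φ : Q →+ Q :=
    { toFun := hQ.rightMul e
      map_zero' := hQ.idem e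
      map_add' := hQ.rightMul_add e }
  have hmul : ∀ x y, m x y = φ x + m e y := fun x y => (hQ.add_mul_self_mul e x y).symm
  refine ⟨G, φ, (hQ.rightMul e).bijective, fun x hx => ?_, fun x y => ?_⟩
  · exact ((hQ.leftMul x).injective ((hx : m x e = x).trans (hQ.idem x).symm)).symm
  · have hy : φ y + m e y = y := by rw [← hmul, hQ.idem]
    rw [hmul, add_sub_assoc, eq_sub_of_add_eq' hy]

end IsIdempotentMedialQuasigroup

theorem pentagonal_phi_pow_five (Q : Type*) [Nonempty Q] (m : Q → Q → Q)
    (h : IsPentagonal m) :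
    ∃ (_ : AddCommGroup Q) (φ : Q →+ Q),
      Function.Bijective φ ∧
      (∀ x : Q, φ x = x → x = 0) ∧
      (∀ x y : Q, m x y = φ x + y - φ y) ∧
      (((∀ x : Q, φ (φ (φ (φ (φ x)))) = -x) ∧ ¬ (∀ x : Q, φ x = -x)) ∨
        ((∀ x : Q, φ x = -x) ∧ (∀ x : Q, (5 : ℕ) • x = 0))) := by
  obtain ⟨G, φ, hbij, hreg, hm⟩ := h.isIdempotentMedialQuasigroup.exists_addCommGroup_mul_eq
  have hquartic := AddMonoid.End.quartic_eq_zero_of_pentagonal φ hm h.2.2.2.2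
  refine ⟨G, φ, hbij, hreg, hm, ?_⟩
  by_cases hneg : ∀ x, φ x = -x
  · refine Or.inr ⟨hneg, fun x => ?_⟩
    have h5 : (5 : AddMonoid.End Q) = 0 := by
      rw [← hquartic, show φ = (-1 : AddMonoid.End Q) from AddMonoidHom.ext hneg]
      norm_num
    simpa using DFunLike.congr_fun h5 x
  · exact Or.inl ⟨DFunLike.congr_fun (pow_five_eq_neg_one_of_quartic_eq_zero hquartic), hneg⟩
end

section
/- A groupoid (Q,·) of order n > 2 is a pentagonal quasigroup induced by the cyclic group Z_n if and only if there exists a with 1 < a < n, gcd(a,n) = gcd(a−1,n) = 1, x·y = (ax + (1−a)y) mod n, and a⁴ − a³ + a² − a + 1 ≡ 0 (mod n). -/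
/-- A groupoid on `ZMod n` is induced by the group `ZMod n` if its multiplication
comes from a regular automorphism satisfying the pentagonal polynomial identity. -/
def InducedByZMod (n : ℕ) (m : ZMod n → ZMod n → ZMod n) : Prop :=
  ∃ φ : ZMod n →+ ZMod n,
    Function.Bijective φ ∧
    (∀ x, φ x = x → x = 0) ∧
    (∀ x y, m x y = φ x + y - φ y) ∧
    (∀ x, φ (φ (φ (φ x))) - φ (φ (φ x)) + φ (φ x) - φ x + x = 0)

theorem pentagonal_ZMod_characterization (n : ℕ) (hn : 2 < n)
    (m : ZMod n → ZMod n → ZMod n) :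
    (IsPentagonal m ∧ InducedByZMod n m) ↔
      ∃ a : ℕ, 1 < a ∧ a < n ∧ Nat.Coprime a n ∧ Nat.Coprime (a - 1) n ∧
        (∀ x y : ZMod n, m x y = (a : ZMod n) * x + (1 - (a : ZMod n)) * y) ∧
        (a : ZMod n) ^ 4 - (a : ZMod n) ^ 3 + (a : ZMod n) ^ 2 - (a : ZMod n) + 1 = 0 := by
  haveI : NeZero n := ⟨by omega⟩
  haveI : Fact (1 < n) := ⟨by omega⟩
  constructor
  · rintro ⟨-, φ, hbij, hreg, hm, h5⟩
    set A : ZMod n := φ 1 with hA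
    have hφ : ∀ x, φ x = A * x := by
      intro x
      conv_lhs => rw [show x = x.val • (1 : ZMod n) by
        rw [nsmul_eq_mul, mul_one, ZMod.natCast_rightInverse x]]
      rw [map_nsmul, nsmul_eq_mul, ZMod.natCast_rightInverse x, mul_comm]
    have hAu : IsUnit A := by
      obtain ⟨x, hx⟩ := hbij.2 1
      exact IsUnit.of_mul_eq_one (a := A) x (by rw [← hφ x, hx])
    have hBu : IsUnit (A - 1) := by
      have hinj : Function.Injective (fun x => (A - 1) * x) := by
        intro x y hxy
        have h0 : (A - 1) * (x - y) = 0 := by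
          simp only at hxy; linear_combination hxy
        have : φ (x - y) = x - y := by rw [hφ]; linear_combination h0
        exact sub_eq_zero.mp (hreg _ this)
      obtain ⟨x, hx⟩ := Finite.injective_iff_surjective.mp hinj 1
      exact IsUnit.of_mul_eq_one x hx
    have h5A : A ^ 4 - A ^ 3 + A ^ 2 - A + 1 = 0 := by
      have := h5 1
      simp only [hφ] at this
      linear_combination this
    refine ⟨A.val, ?_, A.val_lt, ?_, ?_, ?_, ?_⟩
    · by_contra h
      push_neg at h
      interval_cases hv : A.val
      · have : A = 0 := by rw [← ZMod.natCast_rightInverse A, hv]; simp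
        rw [this] at hAu
        exact zero_ne_one (isUnit_zero_iff.mp hAu)
      · have : A = 1 := by rw [← ZMod.natCast_rightInverse A, hv]; simp
        rw [this, sub_self] at hBu
        exact zero_ne_one (isUnit_zero_iff.mp hBu)
    · rw [← ZMod.isUnit_iff_coprime, ZMod.natCast_rightInverse A]; exact hAu
    · have hge : 1 ≤ A.val := by
        by_contra h
        have hv : A.val = 0 := by omega
        have : A = 0 := by rw [← ZMod.natCast_rightInverse A, hv]; simp
        rw [this] at hAu
        exact zero_ne_one (isUnit_zero_iff.mp hAu)
      rw [← ZMod.isUnit_iff_coprime]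
      have : ((A.val - 1 : ℕ) : ZMod n) = A - 1 := by
        rw [Nat.cast_sub hge, ZMod.natCast_rightInverse A, Nat.cast_one]
      rw [this]; exact hBu
    · intro x y
      rw [hm, hφ, hφ, ZMod.natCast_rightInverse A]; ring
    · rw [ZMod.natCast_rightInverse A]; exact h5A
  · rintro ⟨a, ha1, han, hcop, hcop1, hm, h5⟩
    set A : ZMod n := (a : ZMod n) with hA
    have hAu : IsUnit A := (ZMod.isUnit_iff_coprime a n).mpr hcop
    have hBu : IsUnit (1 - A) := by
      have : ((a - 1 : ℕ) : ZMod n) = A - 1 := by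
        rw [Nat.cast_sub (by omega), Nat.cast_one]
      have h := (ZMod.isUnit_iff_coprime (a - 1) n).mpr hcop1
      rw [this] at h
      simpa using h.neg
    obtain ⟨u, hu⟩ := hAu
    obtain ⟨v, hv⟩ := hBu
    have hcancelA : ∀ x : ZMod n, (u⁻¹ : (ZMod n)ˣ) * (A * x) = x := by
      intro x; rw [← hu, ← mul_assoc, ← Units.val_mul, inv_mul_cancel, Units.val_one, one_mul]
    have hcancelB : ∀ x : ZMod n, (v⁻¹ : (ZMod n)ˣ) * ((1 - A) * x) = x := by
      intro x; rw [← hv, ← mul_assoc, ← Units.val_mul, inv_mul_cancel, Units.val_one, one_mul]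
    constructor
    · refine ⟨?_, ?_, ?_, ?_, ?_⟩
      · intro c b
        refine ⟨(v⁻¹ : (ZMod n)ˣ) * (b - A * c), ?_, ?_⟩
        · simp only [hm]
          have h2 : (1 - A) * ((v⁻¹ : (ZMod n)ˣ) * (b - A * c)) = b - A * c := by
            calc (1 - A) * ((v⁻¹ : (ZMod n)ˣ) * (b - A * c))
                = (v⁻¹ : (ZMod n)ˣ) * ((1 - A) * (b - A * c)) := by ring
              _ = b - A * c := hcancelB _
          linear_combination h2
        · intro y hy
          rw [hm] at hy
          have h2 : (1 - A) * y = b - A * c := by linear_combination hy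
          calc y = (v⁻¹ : (ZMod n)ˣ) * ((1 - A) * y) := (hcancelB y).symm
            _ = (v⁻¹ : (ZMod n)ˣ) * (b - A * c) := by rw [h2]
      · intro c b
        refine ⟨(u⁻¹ : (ZMod n)ˣ) * (b - (1 - A) * c), ?_, ?_⟩
        · simp only [hm]
          have h2 : A * ((u⁻¹ : (ZMod n)ˣ) * (b - (1 - A) * c)) = b - (1 - A) * c := by
            calc A * ((u⁻¹ : (ZMod n)ˣ) * (b - (1 - A) * c))
                = (u⁻¹ : (ZMod n)ˣ) * (A * (b - (1 - A) * c)) := by ring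
              _ = b - (1 - A) * c := hcancelA _
          linear_combination h2
        · intro y hy
          rw [hm] at hy
          have h2 : A * y = b - (1 - A) * c := by linear_combination hy
          calc y = (u⁻¹ : (ZMod n)ˣ) * (A * y) := (hcancelA y).symm
            _ = (u⁻¹ : (ZMod n)ˣ) * (b - (1 - A) * c) := by rw [h2]
      · intro x; rw [hm]; ring
      · intro x y z w; simp only [hm]; ring
      · intro x y; simp only [hm]; linear_combination (x - y) * h5
    · refine ⟨AddMonoidHom.mulLeft A, ?_, ?_, ?_, ?_⟩
      · constructor
        · intro x y hxy
          have : A * x = A * y := hxy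
          calc x = (u⁻¹ : (ZMod n)ˣ) * (A * x) := (hcancelA x).symm
            _ = (u⁻¹ : (ZMod n)ˣ) * (A * y) := by rw [this]
            _ = y := hcancelA y
        · intro y
          exact ⟨(u⁻¹ : (ZMod n)ˣ) * y, by
            show A * ((u⁻¹ : (ZMod n)ˣ) * y) = y
            calc A * ((u⁻¹ : (ZMod n)ˣ) * y) = (u⁻¹ : (ZMod n)ˣ) * (A * y) := by ring
              _ = y := hcancelA y⟩
      · intro x hx
        have h2 : (1 - A) * x = 0 := by
          have : A * x = x := hx
          linear_combination -this
        calc x = (v⁻¹ : (ZMod n)ˣ) * ((1 - A) * x) := (hcancelB x).symm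
          _ = (v⁻¹ : (ZMod n)ˣ) * 0 := by rw [h2]
          _ = 0 := mul_zero _
      · intro x y; rw [hm]; show _ = A * x + y - A * y; ring
      · intro x
        show A * (A * (A * (A * x))) - A * (A * (A * x)) + A * (A * x) - A * x + x = 0
        linear_combination x * h5
end

section
/- If φ is a regular automorphism of an Abelian group (Q,+) satisfying φ⁴ − φ³ + φ² − φ + id = 0, then each of the operations x∗y = φ²(y−x) + y, x∘y = φ³(x−y) + y, and x⋄y = φ⁴(y−x) + y defines a pentagonal quasigroup on Q. -/
private lemma unit_bijective {Q : Type*} [AddCommGroup Q] {c : AddMonoid.End Q}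
    (h : IsUnit c) : Function.Bijective c := by
  obtain ⟨u, rfl⟩ := h
  constructor
  · intro x y hxy
    have h2 : (↑u⁻¹ * ↑u : AddMonoid.End Q) x = (↑u⁻¹ * ↑u : AddMonoid.End Q) y := by
      show (↑u⁻¹ : AddMonoid.End Q) ((↑u : AddMonoid.End Q) x) =
        (↑u⁻¹ : AddMonoid.End Q) ((↑u : AddMonoid.End Q) y)
      rw [hxy]
    simpa [u.inv_mul] using h2
  · intro y
    refine ⟨(↑u⁻¹ : AddMonoid.End Q) y, ?_⟩
    have : (↑u * ↑u⁻¹ : AddMonoid.End Q) y = y := by rw [u.mul_inv]; rfl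
    exact this

private lemma master {Q : Type*} [AddCommGroup Q] (a : AddMonoid.End Q)
    (ha : IsUnit a) (hb : IsUnit (1 - a))
    (hΦ : a^4 - a^3 + a^2 - a + 1 = 0) :
    IsPentagonal (fun x y : Q => a x + (y - a y)) := by
  have hbs : ∀ z : Q, (1 - a) z = z - a z := fun z => rfl
  have hΦx : ∀ w : Q, a (a (a (a w))) = a (a (a w)) - a (a w) + a w - w := by
    intro w
    have h := DFunLike.congr_fun hΦ w
    have h2 : a (a (a (a w))) - a (a (a w)) + a (a w) - a w + w = 0 := by
      exact h
    have h3 : a (a (a (a w))) - (a (a (a w)) - a (a w) + a w - w)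
        = a (a (a (a w))) - a (a (a w)) + a (a w) - a w + w := by abel
    exact sub_eq_zero.mp (h3.trans h2)
  refine ⟨?_, ?_, ?_, ?_, ?_⟩
  · -- left division
    intro p q
    obtain ⟨z, hz, huniq⟩ := (unit_bijective hb).existsUnique (q - a p)
    refine ⟨z, ?_, fun w hw => huniq w ?_⟩
    · show a p + (z - a z) = q
      rw [← hbs, hz]; abel
    · show (1 - a) w = q - a p
      rw [hbs]
      have hw' : a p + (w - a w) = q := hw
      rw [← hw']; abel
  · -- right division
    intro p q
    obtain ⟨z, hz, huniq⟩ := (unit_bijective ha).existsUnique (q - (p - a p))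
    refine ⟨z, ?_, fun w hw => huniq w ?_⟩
    · show a z + (p - a p) = q
      rw [hz]; abel
    · have hw' : a w + (p - a p) = q := hw
      rw [← hw']; abel
  · intro x; show a x + (x - a x) = x; abel
  · intro x y z u
    show a (a x + (y - a y)) + ((a z + (u - a u)) - a (a z + (u - a u)))
        = a (a x + (z - a z)) + ((a y + (u - a u)) - a (a y + (u - a u)))
    simp only [map_add, map_sub]
    abel
  · intro x y
    show a (a (a (a x + (y - a y)) + (x - a x)) + (y - a y)) + (x - a x) = y
    simp only [map_add, map_sub]
    rw [hΦx x, hΦx y]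
    abel

theorem pentagonal_constructions (Q : Type*) [AddCommGroup Q] (φ : Q →+ Q)
    (hbij : Function.Bijective φ)
    (hreg : ∀ x : Q, φ x = x → x = 0)
    (hpoly : ∀ x : Q, φ (φ (φ (φ x))) - φ (φ (φ x)) + φ (φ x) - φ x + x = 0) :
    IsPentagonal (fun x y : Q => φ (φ (y - x)) + y) ∧
    IsPentagonal (fun x y : Q => φ (φ (φ (x - y))) + y) ∧
    IsPentagonal (fun x y : Q => φ (φ (φ (φ (y - x)))) + y) := by
  set f : AddMonoid.End Q := φ with hf
  have hΦ : f^4 - f^3 + f^2 - f + 1 = 0 := by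
    refine DFunLike.ext _ _ fun w => ?_
    show f (f (f (f w))) - f (f (f w)) + f (f w) - f w + w = 0
    exact hpoly w
  have mk : ∀ c d : AddMonoid.End Q, c * d = 1 → d * c = 1 → IsUnit c :=
    fun c d h1 h2 => ⟨⟨c, d, h1, h2⟩, rfl⟩
  -- f is a unit
  have hfu : IsUnit f := by
    refine mk f (1 - f + f^2 - f^3) ?_ ?_
    · have e : f * (1 - f + f^2 - f^3) = -(f^4 - f^3 + f^2 - f + 1) + 1 := by noncomm_ring
      rw [e, hΦ]; simp
    · have e : (1 - f + f^2 - f^3) * f = -(f^4 - f^3 + f^2 - f + 1) + 1 := by noncomm_ring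
      rw [e, hΦ]; simp
  refine ⟨?_, ?_, ?_⟩
  · -- a = -f^2
    have hΦa : (-f^2)^4 - (-f^2)^3 + (-f^2)^2 - (-f^2) + 1 = 0 := by
      have e : (-f^2)^4 - (-f^2)^3 + (-f^2)^2 - (-f^2) + 1
          = (1 + f + f^2 + f^3 + f^4) * (f^4 - f^3 + f^2 - f + 1) := by noncomm_ring
      rw [e, hΦ]; simp
    have hbu : IsUnit (1 - (-f^2)) := by
      refine mk _ (f - f^2) ?_ ?_
      · have e : (1 - (-f^2)) * (f - f^2) = -(f^4 - f^3 + f^2 - f + 1) + 1 := by noncomm_ring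
        rw [e, hΦ]; simp
      · have e : (f - f^2) * (1 - (-f^2)) = -(f^4 - f^3 + f^2 - f + 1) + 1 := by noncomm_ring
        rw [e, hΦ]; simp
    have hau : IsUnit (-f^2) := (hfu.pow 2).neg
    have e : (fun x y : Q => φ (φ (y - x)) + y)
        = fun x y : Q => (-f^2) x + (y - (-f^2) y) := by
      funext x y
      show φ (φ (y - x)) + y = -(φ (φ x)) + (y - -(φ (φ y)))
      simp only [hf, map_sub]
      abel
    rw [e]
    exact master (-f^2) hau hbu hΦa
  · -- a = f^3
    have hΦa : (f^3)^4 - (f^3)^3 + (f^3)^2 - (f^3) + 1 = 0 := by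
      have e : (f^3)^4 - (f^3)^3 + (f^3)^2 - (f^3) + 1
          = (1 + f - f^3 - f^4 - f^5 + f^7 + f^8) * (f^4 - f^3 + f^2 - f + 1) := by
        noncomm_ring
      rw [e, hΦ]; simp
    have hbu : IsUnit (1 - f^3) := by
      refine mk _ (1 - f + f^2) ?_ ?_
      · have e : (1 - f^3) * (1 - f + f^2) = -f * (f^4 - f^3 + f^2 - f + 1) + 1 := by
          noncomm_ring
        rw [e, hΦ]; simp
      · have e : (1 - f + f^2) * (1 - f^3) = -f * (f^4 - f^3 + f^2 - f + 1) + 1 := by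
          noncomm_ring
        rw [e, hΦ]; simp
    have hau : IsUnit (f^3) := hfu.pow 3
    have e : (fun x y : Q => φ (φ (φ (x - y))) + y)
        = fun x y : Q => (f^3) x + (y - (f^3) y) := by
      funext x y
      show φ (φ (φ (x - y))) + y = φ (φ (φ x)) + (y - φ (φ (φ y)))
      simp only [hf, map_sub]
      abel
    rw [e]
    exact master (f^3) hau hbu hΦa
  · -- a = -f^4
    have hΦa : (-f^4)^4 - (-f^4)^3 + (-f^4)^2 - (-f^4) + 1 = 0 := by
      have e : (-f^4)^4 - (-f^4)^3 + (-f^4)^2 - (-f^4) + 1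
          = (1 + f + f^4 - f^6 + f^8 + f^11 + f^12) * (f^4 - f^3 + f^2 - f + 1) := by
        noncomm_ring
      rw [e, hΦ]; simp
    have hbu : IsUnit (1 - (-f^4)) := by
      refine mk _ (1 - f - f^3) ?_ ?_
      · have e : (1 - (-f^4)) * (1 - f - f^3)
            = (-f - f^2 - f^3) * (f^4 - f^3 + f^2 - f + 1) + 1 := by noncomm_ring
        rw [e, hΦ]; simp
      · have e : (1 - f - f^3) * (1 - (-f^4))
            = (-f - f^2 - f^3) * (f^4 - f^3 + f^2 - f + 1) + 1 := by noncomm_ring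
        rw [e, hΦ]; simp
    have hau : IsUnit (-f^4) := (hfu.pow 4).neg
    have e : (fun x y : Q => φ (φ (φ (φ (y - x)))) + y)
        = fun x y : Q => (-f^4) x + (y - (-f^4) y) := by
      funext x y
      show φ (φ (φ (φ (y - x)))) + y = -(φ (φ (φ (φ x)))) + (y - -(φ (φ (φ (φ y)))))
      simp only [hf, map_sub]
      abel
    rw [e]
    exact master (-f^4) hau hbu hΦa
end

section
/- Let n > 5 and let (Z_n,·) be a pentagonal quasigroup with x·y = (ax + (1−a)y) mod n, where 1 < a < n−1, gcd(a,n) = gcd(a−1,n) = 1 and a⁴ − a³ + a² − a + 1 ≡ 0 (mod n). If m divides n, then Z_m with multiplication x·y = (a'x + (1−a')y) mod m, where a' = a mod m, is a pentagonal quasigroup; i.e., (Z_n,·) contains a pentagonal subquasigroup of order m. -/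
theorem pentagonal_subquasigroup (n m a : ℕ) (hn : 5 < n)
    (ha1 : 1 < a) (ha2 : a < n - 1)
    (hc1 : Nat.Coprime a n) (hc2 : Nat.Coprime (a - 1) n)
    (hpoly : (a : ZMod n) ^ 4 - (a : ZMod n) ^ 3 + (a : ZMod n) ^ 2 - (a : ZMod n) + 1 = 0)
    (hpq : IsPentagonal (fun x y : ZMod n => (a : ZMod n) * x + (1 - (a : ZMod n)) * y))
    (hm : m ∣ n) :
    IsPentagonal
      (fun x y : ZMod m => ((a % m : ℕ) : ZMod m) * x + (1 - ((a % m : ℕ) : ZMod m)) * y) := by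
  have hmz : ((a % m : ℕ) : ZMod m) = ((a : ℕ) : ZMod m) := ZMod.natCast_mod a m
  rw [hmz]
  set k : ZMod m := ((a : ℕ) : ZMod m) with hk
  -- m ≠ 0
  have hm0 : m ≠ 0 := by
    rintro rfl
    simp only [Nat.zero_dvd] at hm
    omega
  have : NeZero m := ⟨hm0⟩
  -- k is a unit
  have hca : Nat.Coprime a m := Nat.Coprime.coprime_dvd_right hm hc1
  have hca1 : Nat.Coprime (a - 1) m := Nat.Coprime.coprime_dvd_right hm hc2
  have hk1 : IsUnit k := (ZMod.isUnit_iff_coprime a m).mpr hca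
  have hcast : ((a - 1 : ℕ) : ZMod m) = k - 1 := by
    have : (1 : ℕ) ≤ a := le_of_lt ha1
    push_cast [Nat.cast_sub this]
    ring
  have hk2 : IsUnit (1 - k) := by
    have := (ZMod.isUnit_iff_coprime (a - 1) m).mpr hca1
    rw [hcast] at this
    simpa using this.neg
  -- polynomial identity descends
  have hpoly' : k ^ 4 - k ^ 3 + k ^ 2 - k + 1 = 0 := by
    have := congrArg (ZMod.castHom hm (ZMod m)) hpoly
    simpa [map_add, map_sub, map_pow, map_one, map_natCast] using this
  refine ⟨?_, ?_, ?_, ?_, ?_⟩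
  · intro p q
    obtain ⟨u, hu⟩ := hk2
    refine ⟨↑u⁻¹ * (q - k * p), ?_, ?_⟩
    · simp only [← hu]
      simp only [Units.mul_inv_cancel_left]
      ring
    · intro y hy
      simp only at hy
      have h2 : (1 - k) * y = q - k * p := by linear_combination hy
      calc y = ↑u⁻¹ * ((1 - k) * y) := by rw [← hu, ← mul_assoc, u.inv_mul, one_mul]
        _ = ↑u⁻¹ * (q - k * p) := by rw [h2]
  · intro p q
    obtain ⟨u, hu⟩ := hk1
    refine ⟨↑u⁻¹ * (q - (1 - k) * p), ?_, ?_⟩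
    · simp only [← hu]
      simp only [Units.mul_inv_cancel_left]
      ring
    · intro y hy
      simp only at hy
      have h2 : k * y = q - (1 - k) * p := by linear_combination hy
      calc y = ↑u⁻¹ * (k * y) := by rw [← hu, ← mul_assoc, u.inv_mul, one_mul]
        _ = ↑u⁻¹ * (q - (1 - k) * p) := by rw [h2]
  · intro x
    ring
  · intro x y z u
    ring
  · intro x y
    simp only
    linear_combination (x - y) * hpoly'
end

section
/- If a finite Abelian group G inducing a pentagonal quasigroup has an element of order k > 1, then G has at least four elements of order k. -/
/-!
Put `ψ = -φ`. Multiplying the pentagonal relation by `φ + 1` gives `φ⁵ = -1`, so `ψ⁵ = 1`.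
Since `ψ` preserves orders, either `ψ` moves `x` and its orbit consists of five elements of
order `k`, or `φ x = -x`, in which case the relation collapses to `5 • x = 0`, so `k = 5` and
the four nonzero multiples of `x` have order `k`.
-/

/-- An Abelian group induces a pentagonal quasigroup if it has a regular
automorphism φ with φ⁴ - φ³ + φ² - φ + id = 0. -/
def InducesPentagonal (G : Type*) [AddCommGroup G] : Prop :=
  ∃ φ : G →+ G,
    Function.Bijective φ ∧
    (∀ x, φ x = x → x = 0) ∧
    (∀ x, φ (φ (φ (φ x))) - φ (φ (φ x)) + φ (φ x) - φ x + x = 0)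

open Function

theorem Function.minimalPeriod_le_card_subtype {α : Type*} [Finite α] {f : α → α}
    {p : α → Prop} (hf : ∀ y, p y → p (f y)) {x : α} (hx : p x) :
    minimalPeriod f x ≤ Nat.card {y // p y} := by
  have hpx : ∀ n, p (f^[n] x) := fun n => by
    induction n with
    | zero => exact hx
    | succ n ih => rw [iterate_succ_apply']; exact hf _ ih
  simpa using Nat.card_le_card_of_injective
    (fun n : Fin (minimalPeriod f x) => (⟨f^[n] x, hpx n⟩ : {y // p y}))
    fun m n hmn => Fin.ext <|
      iterate_injOn_Iio_minimalPeriod m.isLt n.isLt (congrArg Subtype.val hmn)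

theorem sub_one_le_card_addOrderOf_eq_prime {G : Type*} [AddGroup G] [Finite G] {p : ℕ}
    [Fact p.Prime] {x : G} (hx : addOrderOf x = p) :
    p - 1 ≤ Nat.card {y : G // addOrderOf y = p} := by
  have hsub : (AddSubgroup.zmultiples x : Set G) \ {0} ⊆ {y | addOrderOf y = p} := by
    rintro y ⟨hy, hy0 : y ≠ 0⟩
    exact addOrderOf_eq_prime
      (addOrderOf_dvd_iff_nsmul_eq_zero.mp (hx ▸ addOrderOf_dvd_of_mem_zmultiples hy)) hy0
  calc p - 1 = ((AddSubgroup.zmultiples x : Set G) \ {0}).ncard := by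
        rw [Set.ncard_sdiff_singleton_of_mem (AddSubgroup.zero_mem _), ← Nat.card_coe_set_eq,
          SetLike.coe_sort_coe, Nat.card_zmultiples, hx]
    _ ≤ _ := Set.ncard_le_ncard hsub

section Pentagonal

variable {G : Type*} [AddCommGroup G] {φ : G →+ G}

theorem isPeriodicPt_neg_five
    (hφ : ∀ x, φ (φ (φ (φ x))) - φ (φ (φ x)) + φ (φ x) - φ x + x = 0) (x : G) :
    IsPeriodicPt (fun y => -φ y) 5 x := by
  have h₁ := hφ x
  have h₂ := congrArg φ (hφ x)
  simp only [map_add, map_sub, map_zero] at h₂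
  simp only [IsPeriodicPt, IsFixedPt, iterate_succ, iterate_zero, comp_apply, id, map_neg,
    neg_neg]
  linear_combination (norm := module) -h₂ - h₁

theorem five_nsmul_eq_zero_of_apply_eq_neg
    (hφ : ∀ x, φ (φ (φ (φ x))) - φ (φ (φ x)) + φ (φ x) - φ x + x = 0) {x : G}
    (hx : φ x = -x) : 5 • x = 0 := by
  have h := hφ x
  simp only [hx, map_neg, neg_neg] at h
  rw [← h]
  abel

end Pentagonal

theorem four_elements_of_order (G : Type*) [AddCommGroup G] [Fintype G]
    (h : InducesPentagonal G) (k : ℕ) (hk : 1 < k) (x : G) (hx : addOrderOf x = k) :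
    4 ≤ Nat.card {y : G // addOrderOf y = k} := by
  obtain ⟨φ, hbij, -, hφ⟩ := h
  have : Fact (Nat.Prime 5) := ⟨Nat.prime_five⟩
  by_cases hfix : IsFixedPt (fun y => -φ y) x
  · have hx0 : x ≠ 0 := by rintro rfl; rw [addOrderOf_zero] at hx; omega
    have h5 : addOrderOf x = 5 :=
      addOrderOf_eq_prime (five_nsmul_eq_zero_of_apply_eq_neg hφ (neg_eq_iff_eq_neg.mp hfix)) hx0
    rw [← hx, h5]
    exact sub_one_le_card_addOrderOf_eq_prime h5
  · have hψ : ∀ y, addOrderOf y = k → addOrderOf (-φ y) = k := fun y hy => by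
      rw [addOrderOf_neg, addOrderOf_injective φ hbij.injective, hy]
    calc 4 ≤ minimalPeriod (fun y => -φ y) x := by
          rw [minimalPeriod_eq_prime (isPeriodicPt_neg_five hφ x) hfix]; norm_num
      _ ≤ _ := minimalPeriod_le_card_subtype hψ hx
end

section
/- If n ≡ 2 (mod 4), or n ≡ 3 or 6 (mod 9) with 3 | n and 9 ∤ n, or 4 | n and 8 ∤ n, then no Abelian group of order n induces a pentagonal quasigroup. -/
open AddSubgroup Function

theorem AddSubgroup.exists_card_torsionBy_eq_pow {G : Type*} [AddCommGroup G] [Finite G] {p : ℕ}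
    (hp : p.Prime) : ∃ r, Nat.card (torsionBy G p) = p ^ r := by
  have : Fact p.Prime := ⟨hp⟩
  let := torsionBy.zmodModule (A := G) (n := p)
  exact ⟨_, by simpa using Module.natCard_eq_pow_finrank (K := ZMod p) (V := torsionBy G p)⟩

section PentagonalAutomorphism

variable {G : Type*} [AddCommGroup G] {φ : G →+ G}

theorem iterate_five_eq_neg
    (hpent : ∀ x, φ (φ (φ (φ x))) - φ (φ (φ x)) + φ (φ x) - φ x + x = 0) (x : G) :
    φ^[5] x = -x := by
  show φ (φ (φ (φ (φ x)))) = -x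
  linear_combination (norm := abel) hpent (φ x) + hpent x

theorem five_smul_eq_zero_of_map_map_eq
    (hpent : ∀ x, φ (φ (φ (φ x))) - φ (φ (φ x)) + φ (φ x) - φ x + x = 0) {x : G}
    (hx : φ (φ x) = x) : 5 • x = 0 := by
  have e1 := hpent x
  have e2 := hpent (φ x)
  simp only [hx] at e1 e2
  linear_combination (norm := module) 3 • e1 + 2 • e2

theorem five_le_minimalPeriod
    (hpent : ∀ x, φ (φ (φ (φ x))) - φ (φ (φ x)) + φ (φ x) - φ x + x = 0)
    (hreg : ∀ x, φ x = x → x = 0) {x : G} (hx : x ≠ 0) (h5x : 5 • x ≠ 0) :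
    5 ≤ minimalPeriod φ x := by
  have h10 : IsPeriodicPt φ 10 x := by
    rw [IsPeriodicPt, IsFixedPt, show 10 = 5 + 5 from rfl, iterate_add_apply,
      iterate_five_eq_neg hpent, iterate_five_eq_neg hpent, neg_neg]
  have hdvd := h10.minimalPeriod_dvd
  have hpos := h10.minimalPeriod_pos (by norm_num)
  have hper := isPeriodicPt_minimalPeriod φ x
  by_contra! hlt
  interval_cases h : minimalPeriod φ x
  · exact hx (hreg x hper)
  · exact h5x (five_smul_eq_zero_of_map_map_eq hpent hper)
  all_goals norm_num at hdvd

theorem five_le_card_torsionBy [Finite G]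
    (hpent : ∀ x, φ (φ (φ (φ x))) - φ (φ (φ x)) + φ (φ x) - φ x + x = 0)
    (hreg : ∀ x, φ x = x → x = 0) {p : ℕ} (hp : p.Prime) (hp5 : p ≠ 5)
    (hpG : p ∣ Nat.card G) : 5 ≤ Nat.card (torsionBy G p) := by
  have : Fact p.Prime := ⟨hp⟩
  obtain ⟨x, hxp⟩ := exists_prime_addOrderOf_dvd_card' p hpG
  have hx : x ≠ 0 := by
    rintro rfl
    exact hp.one_lt.ne (addOrderOf_zero (G := G) ▸ hxp)
  have h5x : 5 • x ≠ 0 := fun h => hp5 <|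
    (Nat.prime_dvd_prime_iff_eq hp Nat.prime_five).mp (hxp ▸ addOrderOf_dvd_of_nsmul_eq_zero h)
  have hxT : x ∈ torsionBy G p := torsionBy.nsmul_iff.mpr (hxp ▸ addOrderOf_nsmul_eq_zero x)
  have hmaps : Set.MapsTo φ (torsionBy G p) (torsionBy G p) := fun y hy => by
    rw [SetLike.mem_coe, torsionBy.nsmul_iff] at hy ⊢
    rw [← map_nsmul, hy, map_zero]
  have hper := five_le_minimalPeriod hpent hreg hx h5x
  have hinj : Injective fun k : Fin 5 => (⟨φ^[k] x, hmaps.iterate k hxT⟩ : torsionBy G p) :=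
    fun i j hij => Fin.ext <| iterate_injOn_Iio_minimalPeriod
      (i.isLt.trans_le hper) (j.isLt.trans_le hper) (congrArg Subtype.val hij)
  simpa using Nat.card_le_card_of_injective _ hinj

end PentagonalAutomorphism

theorem InducesPentagonal.pow_succ_dvd_card {G : Type*} [AddCommGroup G] [Finite G]
    (hG : InducesPentagonal G) {p k : ℕ} (hp : p.Prime) (hp5 : p ≠ 5) (hpG : p ∣ Nat.card G)
    (hk : p ^ k < 5) : p ^ (k + 1) ∣ Nat.card G := by
  obtain ⟨φ, -, hreg, hpent⟩ := hG
  obtain ⟨r, hr⟩ := exists_card_torsionBy_eq_pow (G := G) hp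
  have hkr : k < r := (Nat.pow_lt_pow_iff_right hp.one_lt).mp
    (hk.trans_le (hr ▸ five_le_card_torsionBy hpent hreg hp hp5 hpG))
  exact (Nat.pow_dvd_pow p hkr).trans (hr ▸ card_addSubgroup_dvd_card _)

theorem no_pentagonal_of_order (n : ℕ)
    (h : n % 4 = 2 ∨ (3 ∣ n ∧ ¬ 9 ∣ n) ∨ (4 ∣ n ∧ ¬ 8 ∣ n)) :
    ∀ (G : Type) (_ : AddCommGroup G) (_ : Fintype G),
      Fintype.card G = n → ¬ InducesPentagonal G := by
  intro G _ _ hcard hG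
  rw [← Nat.card_eq_fintype_card] at hcard
  subst hcard
  have h8 : 2 ∣ Nat.card G → 8 ∣ Nat.card G :=
    hG.pow_succ_dvd_card (k := 2) Nat.prime_two (by norm_num) (hk := by norm_num)
  have h9 : 3 ∣ Nat.card G → 9 ∣ Nat.card G :=
    hG.pow_succ_dvd_card (k := 1) Nat.prime_three (by norm_num) (hk := by norm_num)
  omega
end

section
/- Every finite pentagonal quasigroup has order congruent to 0 or 1 modulo 5. -/
theorem Nat.mod_eq_zero_or_one_of_mul_self_modEq {p n : ℕ} [hp : Fact p.Prime]
    (h : n * n ≡ n [MOD p]) : n % p = 0 ∨ n % p = 1 := by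
  have hidem : IsIdempotentElem (n : ZMod p) := by
    rw [IsIdempotentElem, ← Nat.cast_mul, ZMod.natCast_eq_natCast_iff]
    exact h
  rcases IsIdempotentElem.iff_eq_zero_or_one.mp hidem with h0 | h1
  · exact .inl (Nat.mod_eq_zero_of_dvd ((ZMod.natCast_eq_zero_iff n p).mp h0))
  · rw [← Nat.cast_one, ZMod.natCast_eq_natCast_iff', Nat.one_mod_eq_one.mpr hp.out.ne_one] at h1
    exact .inr h1

theorem Fintype.card_modEq_card_fixedPoints_of_iterate_prime {α : Type*} [Fintype α]
    [DecidableEq α] {f : α → α} {p : ℕ} [Fact p.Prime] (hf : ∀ x, f^[p] x = x) :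
    Fintype.card α ≡ Nat.card (Function.fixedPoints f) [MOD p] := by
  have hpow : (show Function.End α from f) ^ p ^ 1 = 1 := by
    rw [pow_one]
    exact funext hf
  rw [Nat.card_eq_fintype_card]
  exact Equiv.Perm.card_fixedPoints_modEq hpow

section PentagonalIdentities

variable {Q : Type*} {m : Q → Q → Q} (idem : ∀ x, m x x = x)
  (med : ∀ x y z u, m (m x y) (m z u) = m (m x z) (m y u))
  (pent : ∀ x y, m (m (m (m x y) x) y) x = y)

include idem med

theorem elastic_of_idem_of_medial (a b : Q) : m (m a b) a = m a (m b a) := by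
  calc m (m a b) a = m (m a b) (m a a) := by rw [idem]
    _ = m (m a a) (m b a) := med a b a a
    _ = m a (m b a) := by rw [idem]

theorem pentagon_fifth_term (x y : Q) :
    m (m x y) (m y (m x y)) = m (m (m x y) x) y := by
  calc m (m x y) (m y (m x y))
      = m (m (m x y) y) (m x y) := (elastic_of_idem_of_medial idem med (m x y) y).symm
    _ = m (m (m x y) x) (m y y) := med (m x y) y x y
    _ = m (m (m x y) x) y := by rw [idem]

include pent

theorem pentagon_sixth_term (x y : Q) :
    m (m y (m x y)) (m (m x y) (m y (m x y))) = x := by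
  have elastic := elastic_of_idem_of_medial idem med
  calc m (m y (m x y)) (m (m x y) (m y (m x y)))
      = m (m y (m x y)) (m (m (m x y) y) (m x y)) := by rw [elastic (m x y) y]
    _ = m (m y (m (m x y) y)) (m (m x y) (m x y)) := med y (m x y) (m (m x y) y) (m x y)
    _ = m (m (m (m y x) y) y) (m x y) := by rw [idem, ← elastic y (m x y), elastic y x]
    _ = m (m (m (m y x) y) x) (m y y) := med (m (m y x) y) y x y
    _ = x := by rw [idem, pent y x]

theorem pentagon_seventh_term (x y : Q) : m (m (m x y) (m y (m x y))) x = y := by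
  rw [pentagon_fifth_term idem med, pent]

end PentagonalIdentities

section PentagonShift

variable {Q : Type*}

def pentagonShift (m : Q → Q → Q) (p : Q × Q) : Q × Q := (p.2, m p.1 p.2)

theorem pentagonShift_iterate_five {m : Q → Q → Q} (idem : ∀ x, m x x = x)
    (med : ∀ x y z u, m (m x y) (m z u) = m (m x z) (m y u))
    (pent : ∀ x y, m (m (m (m x y) x) y) x = y) (p : Q × Q) :
    (pentagonShift m)^[5] p = p := by
  obtain ⟨x, y⟩ := p
  simp only [Function.iterate_succ, Function.iterate_zero, Function.comp_apply, pentagonShift,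
    id, pentagon_sixth_term idem med pent, pentagon_seventh_term idem med pent]

theorem fixedPoints_pentagonShift {m : Q → Q → Q} (idem : ∀ x, m x x = x) :
    Function.fixedPoints (pentagonShift m) = Set.range fun x => (x, x) := by
  ext ⟨x, y⟩
  simp only [Function.mem_fixedPoints, Function.IsFixedPt, pentagonShift, Set.mem_range,
    Prod.mk.injEq]
  constructor
  · rintro ⟨rfl, -⟩
    exact ⟨y, rfl, rfl⟩
  · rintro ⟨z, rfl, rfl⟩
    exact ⟨rfl, idem z⟩

end PentagonShift

theorem pentagonal_order_mod_five (Q : Type*) [Fintype Q] (m : Q → Q → Q)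
    (h : IsPentagonal m) :
    Fintype.card Q % 5 = 0 ∨ Fintype.card Q % 5 = 1 := by
  classical
  obtain ⟨-, -, idem, med, pent⟩ := h
  have : Fact (Nat.Prime 5) := ⟨by norm_num⟩
  apply Nat.mod_eq_zero_or_one_of_mul_self_modEq
  have hcount := Fintype.card_modEq_card_fixedPoints_of_iterate_prime
    (pentagonShift_iterate_five idem med pent)
  rwa [fixedPoints_pentagonShift idem,
    Nat.card_range_of_injective (fun _ _ h => congrArg Prod.fst h), Nat.card_eq_fintype_card,
    Fintype.card_prod] at hcount
end

section
/- A groupoid (Q,·) is a commutative pentagonal quasigroup if and only if there exists an Abelian group (Q,+) of exponent 11 such that x·y = 6x + 6y for all x,y ∈ Q. -/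
structure IsCommIdemMedialQuasigroup {Q : Type*} (m : Q → Q → Q) : Prop where
  existsUnique_mul_right : ∀ a b : Q, ∃! x, m x a = b
  mul_self : ∀ x, m x x = x
  medial : ∀ x y z u, m (m x y) (m z u) = m (m x z) (m y u)
  comm : ∀ x y, m x y = m y x

theorem IsPentagonal.isCommIdemMedialQuasigroup {Q : Type*} {m : Q → Q → Q}
    (hp : IsPentagonal m) (hc : ∀ x y, m x y = m y x) : IsCommIdemMedialQuasigroup m :=
  ⟨hp.2.1, hp.2.2.1, hp.2.2.2.1, hc⟩

namespace IsCommIdemMedialQuasigroup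

variable {Q : Type*} {m : Q → Q → Q} (h : IsCommIdemMedialQuasigroup m)

noncomputable def mulRight (a : Q) : Q ≃ Q :=
  Equiv.ofBijective (m · a)
    ((Function.bijective_iff_existsUnique _).2 (h.existsUnique_mul_right a))

@[simp]
theorem mulRight_apply (a x : Q) : h.mulRight a x = m x a := rfl

theorem mul_mulRight_symm (a x : Q) : m ((h.mulRight a).symm x) a = x :=
  (h.mulRight a).apply_symm_apply x

theorem mulRight_symm_self (a : Q) : (h.mulRight a).symm a = a := by
  rw [Equiv.symm_apply_eq, mulRight_apply, h.mul_self]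

theorem mulRight_mul (a x y : Q) :
    h.mulRight a (m x y) = m (h.mulRight a x) (h.mulRight a y) := by
  simp only [mulRight_apply]
  conv_lhs => rw [← h.mul_self a]
  exact h.medial x y a a

theorem mulRight_symm_mul (a x y : Q) :
    (h.mulRight a).symm (m x y) = m ((h.mulRight a).symm x) ((h.mulRight a).symm y) := by
  rw [Equiv.symm_apply_eq, mulRight_mul, Equiv.apply_symm_apply, Equiv.apply_symm_apply]

noncomputable def add (e x y : Q) : Q :=
  m ((h.mulRight e).symm x) ((h.mulRight e).symm y)

noncomputable def neg (e x : Q) : Q :=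
  h.mulRight e ((h.mulRight ((h.mulRight e).symm x)).symm e)

theorem add_comm (e x y : Q) : h.add e x y = h.add e y x :=
  h.comm _ _

theorem add_right_comm (e x y z : Q) :
    h.add e (h.add e x y) z = h.add e (h.add e x z) y := by
  simp only [add, h.mulRight_symm_mul]
  conv_lhs => rw [← h.mul_mulRight_symm e ((h.mulRight e).symm z)]
  conv_rhs => rw [← h.mul_mulRight_symm e ((h.mulRight e).symm y)]
  exact h.medial _ _ _ _

theorem add_assoc (e x y z : Q) :
    h.add e (h.add e x y) z = h.add e x (h.add e y z) := by
  rw [h.add_comm e x (h.add e y z), h.add_right_comm e y z x, h.add_comm e y x]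

theorem zero_add (e x : Q) : h.add e e x = x := by
  rw [add, h.mulRight_symm_self, h.comm, h.mul_mulRight_symm]

theorem neg_add_cancel (e x : Q) : h.add e (h.neg e x) x = e := by
  rw [add, neg, Equiv.symm_apply_apply, h.mul_mulRight_symm]

noncomputable abbrev addCommGroup (e : Q) : AddCommGroup Q :=
  letI : Zero Q := ⟨e⟩
  letI : Add Q := ⟨h.add e⟩
  letI : Neg Q := ⟨h.neg e⟩
  { add_assoc := h.add_assoc e
    zero_add := h.zero_add e
    add_zero := fun x => (h.add_comm e x e).trans (h.zero_add e x)
    add_comm := h.add_comm e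
    neg_add_cancel := h.neg_add_cancel e
    nsmul := nsmulRec
    zsmul := zsmulRec }

theorem exists_addCommGroup (h : IsCommIdemMedialQuasigroup m) [Nonempty Q] :
    ∃ (_ : AddCommGroup Q) (f : AddMonoid.End Q),
      (∀ x, 2 • f x = x) ∧ ∀ x y, m x y = f x + f y := by
  obtain ⟨e⟩ := ‹Nonempty Q›
  let _ : AddCommGroup Q := h.addCommGroup e
  have hadd (x y : Q) : x + y = m ((h.mulRight e).symm x) ((h.mulRight e).symm y) := rfl
  have hmul (x y : Q) : m x y = h.mulRight e x + h.mulRight e y := by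
    rw [hadd, Equiv.symm_apply_apply, Equiv.symm_apply_apply]
  refine ⟨_, AddMonoidHom.mk' (h.mulRight e) fun x y => ?_, fun x => ?_, hmul⟩
  · rw [← hmul, hadd, mulRight_mul, Equiv.apply_symm_apply, Equiv.apply_symm_apply]
  · show 2 • h.mulRight e x = x
    rw [two_nsmul, ← hmul, h.mul_self]

end IsCommIdemMedialQuasigroup

theorem eleven_eq_zero_and_eq_six_of_two_mul_eq_one {R : Type*} [Ring R] {f : R}
    (hf : 2 * f = 1) (hp : f ^ 4 + f ^ 2 = 1) : (11 : R) = 0 ∧ f = 6 := by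
  have hpow (n : ℕ) : 2 ^ n * f ^ n = 1 := by
    rw [← (Commute.ofNat_left 2 f).mul_pow, hf, one_pow]
  have h16 : (16 : R) = 5 := calc
    (16 : R) = 2 ^ 4 * (f ^ 4 + f ^ 2) := by rw [hp]; norm_num
    _ = 2 ^ 4 * f ^ 4 + 4 * (2 ^ 2 * f ^ 2) := by noncomm_ring
    _ = 5 := by rw [hpow, hpow]; norm_num
  have h11 : (11 : R) = 0 := by
    rw [← sub_eq_zero.2 h16]; norm_num
  refine ⟨h11, ?_⟩
  calc f = f + 11 * f := by rw [h11, zero_mul, add_zero]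
    _ = 6 * (2 * f) := by noncomm_ring
    _ = 6 := by rw [hf, mul_one]

theorem IsPentagonal.exists_addCommGroup_of_comm {Q : Type*} [Nonempty Q] {m : Q → Q → Q}
    (hp : IsPentagonal m) (hc : ∀ x y, m x y = m y x) :
    ∃ _ : AddCommGroup Q,
      (∀ x : Q, (11 : ℕ) • x = 0) ∧ ∀ x y : Q, m x y = (6 : ℕ) • x + (6 : ℕ) • y := by
  obtain ⟨_, f, hf, hm⟩ := (hp.isCommIdemMedialQuasigroup hc).exists_addCommGroup
  have h2 : 2 * f = 1 := by
    ext x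
    exact hf x
  have hpent : f ^ 4 + f ^ 2 = 1 := by
    ext y
    show f (f (f (f y))) + f (f y) = y
    simpa [hm] using hp.2.2.2.2 0 y
  obtain ⟨h11, h6⟩ := eleven_eq_zero_and_eq_six_of_two_mul_eq_one h2 hpent
  exact ⟨_, fun x => by simpa using congr($h11 x), fun x y => by simp [hm, h6]⟩

section ZMod11

variable {M : Type*} [AddCommGroup M] [Module (ZMod 11) M]

theorem existsUnique_six_smul_add (a b : M) :
    ∃! x : M, (6 : ZMod 11) • a + (6 : ZMod 11) • x = b := by
  refine ⟨(2 : ZMod 11) • b - a, ?_, fun x hx => ?_⟩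
  · match_scalars <;> decide
  · rw [← hx]; match_scalars <;> decide

theorem isPentagonal_six_smul_add :
    IsPentagonal fun x y : M => (6 : ZMod 11) • x + (6 : ZMod 11) • y := by
  refine ⟨existsUnique_six_smul_add, fun a b => ?_, fun x => ?_, fun x y z u => ?_, fun x y => ?_⟩
  · simpa only [add_comm] using existsUnique_six_smul_add a b
  all_goals match_scalars <;> decide

end ZMod11

theorem commutative_pentagonal_characterization (Q : Type*) [Nonempty Q]
    (m : Q → Q → Q) :
    (IsPentagonal m ∧ ∀ x y : Q, m x y = m y x) ↔
      ∃ _ : AddCommGroup Q,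
        (∀ x : Q, (11 : ℕ) • x = 0) ∧
        (∀ x y : Q, m x y = (6 : ℕ) • x + (6 : ℕ) • y) := by
  refine ⟨fun ⟨hp, hc⟩ => hp.exists_addCommGroup_of_comm hc, ?_⟩
  rintro ⟨_, h11, hm⟩
  let _ : Module (ZMod 11) Q := AddCommGroup.zmodModule h11
  obtain rfl : m = fun x y => (6 : ZMod 11) • x + (6 : ZMod 11) • y := by
    funext x y
    rw [hm, ← Nat.cast_smul_eq_nsmul (ZMod 11), ← Nat.cast_smul_eq_nsmul (ZMod 11)]
    rfl
  exact ⟨isPentagonal_six_smul_add, fun x y => add_comm _ _⟩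
end

section
/- Every commutative, idempotent, medial groupoid satisfying the pentagonal identity (xy·x)y·x = y is a quasigroup; consequently, for all a,b the equations xa = b and ax = b have the unique solution x = (ab·a)b. -/
/-! The pentagonal identity itself says that `x = (ab·a)b` solves `xa = b`. Conversely, if
`xa = b`, write the pentagonal identity as `x = ((ax·a)x)·(aa)` and apply mediality:
`x = ((ax·a)a)(xa) = ((ba)a)b = (ab·a)b`. So the solution is unique, and commutativity
transfers both facts to the equation `ax = b`. -/

theorem eq_mul_mul_mul_of_mul_eq {Q : Type*} (m : Q → Q → Q)
    (hcomm : ∀ x y : Q, m x y = m y x) (hidem : ∀ x : Q, m x x = x)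
    (hmed : ∀ x y z u : Q, m (m x y) (m z u) = m (m x z) (m y u))
    (hpent : ∀ x y : Q, m (m (m (m x y) x) y) x = y) {a b x : Q} (hx : m x a = b) :
    x = m (m (m a b) a) b := by
  subst hx
  calc x = m (m (m (m a x) a) x) a := (hpent a x).symm
    _ = m (m (m (m a x) a) x) (m a a) := by rw [hidem]
    _ = m (m (m (m a x) a) a) (m x a) := hmed ..
    _ = m (m (m a (m x a)) a) (m x a) := by rw [hcomm a x, hcomm a (m x a)]

theorem commutative_idempotent_medial_pentagonal_is_quasigroup
    (Q : Type*) (m : Q → Q → Q)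
    (hcomm : ∀ x y : Q, m x y = m y x)
    (hidem : ∀ x : Q, m x x = x)
    (hmed : ∀ x y z u : Q, m (m x y) (m z u) = m (m x z) (m y u))
    (hpent : ∀ x y : Q, m (m (m (m x y) x) y) x = y) :
    ∀ a b : Q,
      (∃! x, m x a = b) ∧ (∃! x, m a x = b) ∧
      m (m (m (m a b) a) b) a = b ∧
      m a (m (m (m a b) a) b) = b ∧
      (∀ x : Q, m x a = b ∨ m a x = b → x = m (m (m a b) a) b) := by
  intro a b
  have hsol : m (m (m (m a b) a) b) a = b := hpent a b
  have hsol' : m a (m (m (m a b) a) b) = b := by rw [hcomm]; exact hsol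
  have huniq : ∀ x, m x a = b → x = m (m (m a b) a) b :=
    fun _ hx => eq_mul_mul_mul_of_mul_eq m hcomm hidem hmed hpent hx
  have huniq' : ∀ x, m a x = b → x = m (m (m a b) a) b :=
    fun x hx => huniq x (by rw [hcomm]; exact hx)
  exact ⟨⟨_, hsol, huniq⟩, ⟨_, hsol', huniq'⟩, hsol, hsol',
    fun x hx => hx.elim (huniq x) (huniq' x)⟩
end

section
/- The finite models of the variety of commutative, idempotent, medial groupoids satisfying (xy·x)y·x = y have orders exactly the powers of 11: the spectrum is {11^n : n = 0, 1, 2, ...}. -/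
/-!
Fix `o ∈ Q`. By the pentagonal law the right translation `R = (· ⋅ o)` is onto, hence a
permutation of the finite set `Q`, and by idempotency and mediality it is an endomorphism of
`(Q, ⋅)`. Then `a + b := R⁻¹ (a ⋅ b)` is an abelian group law with zero `o`, for which
`a ⋅ b = R (a + b)` with `R` additive and `2 R = id`. The pentagonal law at `x = 0` reads
`R⁴ y + R² y = y`; multiplying by `16` gives `y + 4 y = 16 y`, so `11 y = 0` and `|Q|` is a power
of `11`. Conversely `x ⋅ y = 6 x + 6 y`, i.e. `R = 1/2`, works on every `ZMod 11`-vector space.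
-/

open Function

theorem exists_card_eq_pow_of_nsmul_eq_zero {G : Type*} [AddCommGroup G] [Fintype G] {p : ℕ}
    [Fact p.Prime] (h : ∀ x : G, p • x = 0) : ∃ k, Fintype.card G = p ^ k := by
  let := AddCommGroup.zmodModule h
  exact ⟨_, (Module.card_eq_pow_finrank (K := ZMod p)).trans (by rw [ZMod.card])⟩

theorem nsmul_eleven_eq_zero_of_pentagonal {G : Type*} [AddCommGroup G] (h : G →+ G)
    (two_nsmul_h : ∀ a, 2 • h a = a)
    (pentagonal : ∀ x y, h (h (h (h (x + y) + x) + y) + x) = y) (y : G) : 11 • y = 0 := by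
  have four_nsmul_h2 (a : G) : 4 • h (h a) = a := by
    rw [show 4 = 2 * 2 from rfl, mul_nsmul, ← map_nsmul, two_nsmul_h, two_nsmul_h]
  have pentagonal_zero : h (h (h (h y))) + h (h y) = y := by simpa using pentagonal 0 y
  have : 5 • y + 11 • y = 5 • y + 0 := calc
    5 • y + 11 • y = 4 • (4 • h (h (h (h y)))) + 4 • (4 • h (h y)) := by
      rw [← add_nsmul, ← mul_nsmul, ← mul_nsmul', ← nsmul_add, pentagonal_zero]
    _ = 5 • y + 0 := by
      rw [four_nsmul_h2, four_nsmul_h2, add_zero, add_comm, ← succ_nsmul]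
  exact add_left_cancel this

structure IsCommPentagonal {Q : Type*} (m : Q → Q → Q) : Prop where
  comm : ∀ x y, m x y = m y x
  idem : ∀ x, m x x = x
  medial : ∀ x y z u, m (m x y) (m z u) = m (m x z) (m y u)
  pentagonal : ∀ x y, m (m (m (m x y) x) y) x = y

namespace IsCommPentagonal

variable {Q : Type*} {m : Q → Q → Q}

theorem right_distrib (hm : IsCommPentagonal m) (a b c : Q) :
    m (m a b) c = m (m a c) (m b c) := by
  rw [← hm.medial, hm.idem]

theorem bijective_mul_right [Finite Q] (hm : IsCommPentagonal m) (o : Q) : Bijective (m · o) :=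
  Finite.surjective_iff_bijective.mp fun y => ⟨_, hm.pentagonal o y⟩

noncomputable def mulRightEquiv [Finite Q] (hm : IsCommPentagonal m) (o : Q) : Q ≃ Q :=
  Equiv.ofBijective _ (hm.bijective_mul_right o)

section

variable [Finite Q] (hm : IsCommPentagonal m) (o : Q)

local notation "R" => hm.mulRightEquiv o

theorem mulRightEquiv_apply (a : Q) : R a = m a o := rfl

theorem mulRightEquiv_symm_mul (a b : Q) : (R).symm (m a b) = m ((R).symm a) ((R).symm b) := by
  apply (R).injective
  rw [Equiv.apply_symm_apply, mulRightEquiv_apply, hm.right_distrib]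
  simp only [← mulRightEquiv_apply hm o, Equiv.apply_symm_apply]

theorem mulRightEquiv_symm_mul_right (a : Q) : (R).symm (m a o) = a :=
  (R).symm_apply_apply a

/-- The pentagonal law at `(a, o)` says that `(a o ⋅ a) o` is the opposite of `a`. -/
noncomputable abbrev addCommGroup : AddCommGroup Q :=
  letI : Add Q := ⟨fun a b => (R).symm (m a b)⟩
  letI : Zero Q := ⟨o⟩
  letI : Neg Q := ⟨fun a => m (m (m a o) a) o⟩
  { AddGroup.ofLeftAxioms
      (fun a b c => congrArg (R).symm <| calc
        m ((R).symm (m a b)) c = (R).symm (m (m a b) (m c o)) := by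
          rw [hm.mulRightEquiv_symm_mul o (m a b), mulRightEquiv_symm_mul_right]
        _ = (R).symm (m (m a o) (m b c)) := by rw [hm.comm c o, hm.medial]
        _ = m a ((R).symm (m b c)) := by
          rw [hm.mulRightEquiv_symm_mul o (m a o), mulRightEquiv_symm_mul_right])
      (fun a => show (R).symm (m o a) = a by rw [hm.comm, mulRightEquiv_symm_mul_right])
      (fun a => show (R).symm (m (m (m (m a o) a) o) a) = o by
        rw [hm.pentagonal, Equiv.symm_apply_eq, mulRightEquiv_apply, hm.idem]) with
    add_comm := fun a b => congrArg (R).symm (hm.comm a b) }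

end

theorem exists_addCommGroup_eq_map_add [Finite Q] (hm : IsCommPentagonal m) (o : Q) :
    ∃ (_ : AddCommGroup Q) (h : Q →+ Q), (∀ a b, m a b = h (a + b)) ∧ ∀ a, 2 • h a = a := by
  let G := hm.addCommGroup o
  have add_def (a b : Q) : a + b = (hm.mulRightEquiv o).symm (m a b) := rfl
  let h : Q →+ Q :=
    { toFun := hm.mulRightEquiv o
      map_zero' := hm.idem o
      map_add' := fun a b => by
        rw [add_def, add_def, Equiv.apply_symm_apply, hm.mulRightEquiv_symm_mul,
          Equiv.symm_apply_apply, Equiv.symm_apply_apply] }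
  refine ⟨G, h, fun a b => ((hm.mulRightEquiv o).apply_symm_apply (m a b)).symm, fun a => ?_⟩
  rw [two_nsmul, add_def, hm.idem]
  exact (hm.mulRightEquiv o).symm_apply_apply a

theorem exists_card_eq_eleven_pow [Fintype Q] [Nonempty Q] (hm : IsCommPentagonal m) :
    ∃ k, Fintype.card Q = 11 ^ k := by
  obtain ⟨_, h, mul_eq, two_nsmul_h⟩ :=
    hm.exists_addCommGroup_eq_map_add (Classical.arbitrary Q)
  have pentagonal (x y : Q) : h (h (h (h (x + y) + x) + y) + x) = y := by
    simpa only [mul_eq] using hm.pentagonal x y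
  have := Fact.mk Nat.prime_eleven
  exact exists_card_eq_pow_of_nsmul_eq_zero (nsmul_eleven_eq_zero_of_pentagonal h two_nsmul_h pentagonal)

end IsCommPentagonal

theorem isCommPentagonal_six_smul_add (V : Type*) [AddCommGroup V] [Module (ZMod 11) V] :
    IsCommPentagonal fun x y : V => (6 : ZMod 11) • x + (6 : ZMod 11) • y where
  comm x y := add_comm _ _
  idem x := by match_scalars; decide
  medial x y z u := by module
  pentagonal x y := by match_scalars <;> decide

theorem spectrum_commutative_pentagonal :
    {n : ℕ | ∃ (Q : Type) (_ : Fintype Q) (_ : Nonempty Q) (m : Q → Q → Q),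
      (∀ x y : Q, m x y = m y x) ∧
      (∀ x : Q, m x x = x) ∧
      (∀ x y z u : Q, m (m x y) (m z u) = m (m x z) (m y u)) ∧
      (∀ x y : Q, m (m (m (m x y) x) y) x = y) ∧
      Fintype.card Q = n} = {n : ℕ | ∃ k : ℕ, n = 11 ^ k} := by
  ext n
  constructor
  · rintro ⟨Q, _, _, m, comm, idem, medial, pentagonal, rfl⟩
    exact IsCommPentagonal.exists_card_eq_eleven_pow ⟨comm, idem, medial, pentagonal⟩
  · rintro ⟨k, rfl⟩
    obtain ⟨comm, idem, medial, pentagonal⟩ := isCommPentagonal_six_smul_add (Fin k → ZMod 11)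
    exact ⟨_, inferInstance, inferInstance, _, comm, idem, medial, pentagonal, by simp⟩
end

section
/- Let (Z_n,·) with x·y = (ax + (1−a)y) mod n be a pentagonal quasigroup (so a⁴ − a³ + a² − a + 1 ≡ 0 (mod n), gcd(a,n) = gcd(a−1,n) = 1). Then a + k(1−a) ≡ 0 (mod n) for k = (1 − a³ − a) mod n, i.e., the quasigroup is k-translatable for this k, and gcd(k,n) = 1. -/
/-- A groupoid on `ZMod n` is `k`-translatable if each row of the Cayley table is
the cyclic shift by `k` of the previous row, i.e. `i·j = (i+1)·(j+k)`. -/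
def kTranslatable (n k : ℕ) (m : ZMod n → ZMod n → ZMod n) : Prop :=
  ∀ i j : ZMod n, m i j = m (i + 1) (j + (k : ZMod n))

/-! The pentagonal polynomial factors as `a⁴ - a³ + a² - a + 1 = a + (1 - a³ - a)(1 - a)`, so
`k = 1 - a³ - a` satisfies the translatability criterion `a + k(1 - a) = 0`, and
`k (1 - a) = -a` is a unit whenever `a` is, which makes `k` coprime to `n`. -/

theorem kTranslatable_affine_iff {n k : ℕ} {a b : ZMod n} :
    kTranslatable n k (fun x y => a * x + b * y) ↔ a + k * b = 0 := by
  constructor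
  · intro h
    linear_combination -h 0 0
  · intro h i j
    linear_combination -h

section PentagonalRoot

variable {R : Type*} [CommRing R] {a : R}

theorem add_mul_one_sub_eq_zero_of_pentagonal (h : a ^ 4 - a ^ 3 + a ^ 2 - a + 1 = 0) :
    a + (1 - a ^ 3 - a) * (1 - a) = 0 := by
  linear_combination h

theorem isUnit_one_sub_pow_three_sub_of_pentagonal (ha : IsUnit a)
    (h : a ^ 4 - a ^ 3 + a ^ 2 - a + 1 = 0) : IsUnit (1 - a ^ 3 - a) := by
  have hmul : (1 - a ^ 3 - a) * (1 - a) = -a := by linear_combination h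
  exact isUnit_of_mul_isUnit_left (hmul ▸ ha.neg)

end PentagonalRoot

theorem pentagonal_translatable_general (n a : ℕ) (hn : 1 < n)
    (hc1 : Nat.Coprime a n)
    (hpoly : (a : ZMod n) ^ 4 - (a : ZMod n) ^ 3 + (a : ZMod n) ^ 2 - (a : ZMod n) + 1 = 0) :
    (a : ZMod n) + ((1 - (a : ZMod n) ^ 3 - (a : ZMod n)).val : ZMod n) * (1 - (a : ZMod n)) = 0 ∧
    kTranslatable n (1 - (a : ZMod n) ^ 3 - (a : ZMod n)).val
      (fun x y : ZMod n => (a : ZMod n) * x + (1 - (a : ZMod n)) * y) ∧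
    Nat.Coprime (1 - (a : ZMod n) ^ 3 - (a : ZMod n)).val n := by
  have : NeZero n := ⟨by omega⟩
  have htrans : (a : ZMod n) + ((1 - (a : ZMod n) ^ 3 - a).val : ZMod n) * (1 - a) = 0 := by
    rw [ZMod.natCast_zmod_val]
    exact add_mul_one_sub_eq_zero_of_pentagonal hpoly
  have hk : IsUnit (1 - (a : ZMod n) ^ 3 - a) :=
    isUnit_one_sub_pow_three_sub_of_pentagonal ((ZMod.isUnit_iff_coprime a n).mpr hc1) hpoly
  exact ⟨htrans, kTranslatable_affine_iff.mpr htrans, ZMod.val_coe_unit_coprime hk.unit⟩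

theorem pentagonal_translatable (n a : ℕ) (hn : 1 < n)
    (ha1 : 1 < a) (ha2 : a < n)
    (hc1 : Nat.Coprime a n) (hc2 : Nat.Coprime (a - 1) n)
    (hpoly : (a : ZMod n) ^ 4 - (a : ZMod n) ^ 3 + (a : ZMod n) ^ 2 - (a : ZMod n) + 1 = 0) :
    (a : ZMod n) + ((1 - (a : ZMod n) ^ 3 - (a : ZMod n)).val : ZMod n) * (1 - (a : ZMod n)) = 0 ∧
    kTranslatable n (1 - (a : ZMod n) ^ 3 - (a : ZMod n)).val
      (fun x y : ZMod n => (a : ZMod n) * x + (1 - (a : ZMod n)) * y) ∧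
    Nat.Coprime (1 - (a : ZMod n) ^ 3 - (a : ZMod n)).val n :=
  pentagonal_translatable_general n a hn hc1 hpoly
end

section
/- A groupoid of order n is a k-translatable pentagonal quasigroup with k > 1 if and only if it has the form x·y = (ax + (1−a)y) mod n where n divides k⁴ − 2k³ + 4k² − 3k + 1 and a ≡ −k³ + k² − 3k + 1 (mod n). -/
/-!
Translating `t` times turns `i·j` into `(i+t)·(j+tk)`, so `i·j = 0·(j - ki)`; idempotency then
gives `0·((1-k)x) = x`, which together with left cancellation makes `1 - k` a unit `c⁻¹` and
`x·y = (1-c)x + cy`. For such an affine operation with `a = 1 - c`, translatability is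
`a + (1-a)k = 0` and the pentagonal laws amount to `a⁴ - a³ + a² - a + 1 = 0`; eliminating `a`
between these two equations (possible because `1 - a` inverts `1 - k`) gives the divisibility
condition on `k` and the formula for `a`.
-/

def affineOp {R : Type*} [CommRing R] (a : R) (x y : R) : R := a * x + (1 - a) * y

section Affine

variable {R : Type*} [CommRing R]

theorem existsUnique_mul_add_eq {u : R} (hu : IsUnit u) (c b : R) : ∃! x, u * x + c = b := by
  obtain ⟨v, hvu⟩ := hu.exists_left_inv
  refine ⟨v * (b - c), ?_, fun x hx => ?_⟩
  · have huv : u * v = 1 := by rw [mul_comm, hvu]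
    linear_combination (b - c) * huv
  · linear_combination v * hx - x * hvu

theorem isPentagonal_affineOp_iff (a : R) :
    IsPentagonal (affineOp a) ↔ a ^ 4 - a ^ 3 + a ^ 2 - a + 1 = 0 := by
  constructor
  · rintro ⟨-, -, -, -, hpent⟩
    have h := hpent 1 0
    simp only [affineOp] at h
    linear_combination h
  · intro hP
    have hunit : IsUnit a := .of_mul_eq_one (-a ^ 3 + a ^ 2 - a + 1) (by linear_combination -hP)
    have hunit' : IsUnit (1 - a) := .of_mul_eq_one (a ^ 3 + a) (by linear_combination -hP)
    refine ⟨fun p b => ?_, fun p b => ?_, fun x => ?_, fun x y z u => ?_, fun x y => ?_⟩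
    · exact (existsUnique_congr fun x => by rw [affineOp, add_comm]).mp
        (existsUnique_mul_add_eq hunit' (a * p) b)
    · exact (existsUnique_congr fun x => by rw [affineOp]).mp
        (existsUnique_mul_add_eq hunit ((1 - a) * p) b)
    · simp only [affineOp]; ring
    · simp only [affineOp]; ring
    · simp only [affineOp]; linear_combination (x - y) * hP

theorem affine_translatable_pentagonal_iff (a k : R) :
    (a + (1 - a) * k = 0 ∧ a ^ 4 - a ^ 3 + a ^ 2 - a + 1 = 0) ↔
      (k ^ 4 - 2 * k ^ 3 + 4 * k ^ 2 - 3 * k + 1 = 0 ∧ a = -k ^ 3 + k ^ 2 - 3 * k + 1) := by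
  constructor
  · rintro ⟨hak, hP⟩
    -- Multiplying by `(1-k)⁴` and substituting `a(1-k) = -k` turns `a⁴ - a³ + a² - a + 1` into
    -- `k⁴ + k³(1-k) + k²(1-k)² + k(1-k)³ + (1-k)⁴`, which is the quartic in `k`.
    have hD : k ^ 4 - 2 * k ^ 3 + 4 * k ^ 2 - 3 * k + 1 = 0 := by
      linear_combination (1 - k) ^ 4 * hP +
        ((1 - 2 * k + 2 * k ^ 2) + a * (-1 + 2 * k - 2 * k ^ 2 + k ^ 3)
          + a ^ 2 * (1 - 2 * k + k ^ 2) + a ^ 3 * (-1 + 3 * k - 3 * k ^ 2 + k ^ 3)) * hak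
    refine ⟨hD, ?_⟩
    linear_combination (1 - a) * (hak - hD) + (a - (-k ^ 3 + k ^ 2 - 3 * k + 1)) * hak
  · rintro ⟨hD, rfl⟩
    constructor
    · linear_combination hD
    · linear_combination (k ^ 8 - 2 * k ^ 7 + 10 * k ^ 6 - 12 * k ^ 5 + 29 * k ^ 4 - 18 * k ^ 3
        + 25 * k ^ 2 - 3 * k + 1) * hD

end Affine

section Translatable

variable {n k : ℕ} {m : ZMod n → ZMod n → ZMod n}

theorem kTranslatable.apply_add_intCast (h : kTranslatable n k m) (t : ℤ) (i j : ZMod n) :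
    m i j = m (i + t) (j + t * k) := by
  induction t using Int.induction_on generalizing i j with
  | zero => simp
  | succ t ih => rw [ih i j, h]; congr 1 <;> push_cast <;> ring
  | pred t ih => rw [ih i j, h (i + ((-t - 1 : ℤ) : ZMod n))]; congr 1 <;> push_cast <;> ring

theorem kTranslatable.apply_eq_apply_zero (h : kTranslatable n k m) (i j : ZMod n) :
    m i j = m 0 (j - k * i) := by
  rw [h.apply_add_intCast (-(i.cast : ℤ)) i j]
  push_cast
  congr 1 <;> ring

theorem kTranslatable.exists_eq_affineOp (h : kTranslatable n k m) (hidem : ∀ x, m x x = x)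
    (hinj : Function.Injective (m 0)) : ∃ a, m = affineOp a := by
  have hcancel : ∀ y, (1 - k) * m 0 y = y := fun y => hinj <| by
    calc m 0 ((1 - k) * m 0 y) = m 0 (m 0 y - k * m 0 y) := by ring_nf
      _ = m 0 y := by rw [← h.apply_eq_apply_zero, hidem]
  refine ⟨1 - m 0 1, funext₂ fun x y => ?_⟩
  have hlin : m 0 (y - k * x) = m 0 1 * (y - k * x) := by
    linear_combination -m 0 (y - k * x) * hcancel 1 + m 0 1 * hcancel (y - k * x)
  rw [h.apply_eq_apply_zero, hlin, affineOp]
  linear_combination x * hcancel 1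

theorem kTranslatable_affineOp_iff (a : ZMod n) :
    kTranslatable n k (affineOp a) ↔ a + (1 - a) * k = 0 := by
  constructor
  · intro h
    have h00 := h 0 0
    simp only [affineOp] at h00
    linear_combination -h00
  · intro hak i j
    simp only [affineOp]
    linear_combination -hak

end Translatable

theorem dvd_quartic_and_eq_cubic_iff (n k : ℕ) (a : ZMod n) :
    ((n : ℤ) ∣ ((k : ℤ) ^ 4 - 2 * (k : ℤ) ^ 3 + 4 * (k : ℤ) ^ 2 - 3 * (k : ℤ) + 1) ∧
        a = ((-(k : ℤ) ^ 3 + (k : ℤ) ^ 2 - 3 * (k : ℤ) + 1 : ℤ) : ZMod n)) ↔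
      ((k : ZMod n) ^ 4 - 2 * (k : ZMod n) ^ 3 + 4 * (k : ZMod n) ^ 2 - 3 * (k : ZMod n) + 1 = 0 ∧
        a = -(k : ZMod n) ^ 3 + (k : ZMod n) ^ 2 - 3 * (k : ZMod n) + 1) := by
  rw [← ZMod.intCast_zmod_eq_zero_iff_dvd]
  push_cast
  rfl

theorem translatable_pentagonal_characterization_general (n k : ℕ) (m : ZMod n → ZMod n → ZMod n) :
    (IsPentagonal m ∧ kTranslatable n k m) ↔
      ∃ a : ZMod n,
        (∀ x y : ZMod n, m x y = a * x + (1 - a) * y) ∧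
        (n : ℤ) ∣ ((k : ℤ) ^ 4 - 2 * (k : ℤ) ^ 3 + 4 * (k : ℤ) ^ 2 - 3 * (k : ℤ) + 1) ∧
        a = ((-(k : ℤ) ^ 3 + (k : ℤ) ^ 2 - 3 * (k : ℤ) + 1 : ℤ) : ZMod n) := by
  have hform : ∀ a : ZMod n, (∀ x y, m x y = a * x + (1 - a) * y) ↔ m = affineOp a :=
    fun a => ⟨fun h => funext₂ h, fun h x y => by rw [h, affineOp]⟩
  simp only [hform, dvd_quartic_and_eq_cubic_iff]
  constructor
  · rintro ⟨hpent, htr⟩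
    obtain ⟨a, rfl⟩ := htr.exists_eq_affineOp hpent.2.2.1
      fun y z hyz => (hpent.1 0 (m 0 z)).unique hyz rfl
    rw [isPentagonal_affineOp_iff] at hpent
    rw [kTranslatable_affineOp_iff] at htr
    exact ⟨a, rfl, (affine_translatable_pentagonal_iff a _).mp ⟨htr, hpent⟩⟩
  · rintro ⟨a, rfl, hka⟩
    obtain ⟨htr, hpent⟩ := (affine_translatable_pentagonal_iff a _).mpr hka
    exact ⟨(isPentagonal_affineOp_iff a).mpr hpent, (kTranslatable_affineOp_iff a).mpr htr⟩

theorem translatable_pentagonal_characterization (n k : ℕ) (hn : 0 < n)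
    (hk1 : 1 < k) (hk2 : k < n) (m : ZMod n → ZMod n → ZMod n) :
    (IsPentagonal m ∧ kTranslatable n k m) ↔
      ∃ a : ZMod n,
        (∀ x y : ZMod n, m x y = a * x + (1 - a) * y) ∧
        (n : ℤ) ∣ ((k : ℤ) ^ 4 - 2 * (k : ℤ) ^ 3 + 4 * (k : ℤ) ^ 2 - 3 * (k : ℤ) + 1) ∧
        a = ((-(k : ℤ) ^ 3 + (k : ℤ) ^ 2 - 3 * (k : ℤ) + 1 : ℤ) : ZMod n) :=
  translatable_pentagonal_characterization_general n k m
end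

section
/- The quasigroup Z₁₁ with multiplication x·y = (6x + 6y) mod 11 is, up to isomorphism, the only translatable commutative pentagonal quasigroup; it is 10-translatable, and for m > 1 the direct product of m copies of it is not (11^m − 1)-translatable. -/
/-- A finite groupoid is translatable if, under some ordering of its elements
(an equivalence with ZMod of its cardinality), it is k-translatable for some
1 ≤ k < its order. -/
def Translatable (Q : Type) [Fintype Q] (m : Q → Q → Q) : Prop :=
  ∃ (k : ℕ) (e : Q ≃ ZMod (Fintype.card Q)),
    1 ≤ k ∧ k < Fintype.card Q ∧
    kTranslatable (Fintype.card Q) k (fun i j => e (m (e.symm i) (e.symm j)))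

private lemma auxC (n k : ℕ) (hk1 : 1 ≤ k) (hk2 : k < n) (μ : ZMod n → ZMod n → ZMod n)
    (htr : ∀ i j : ZMod n, μ i j = μ (i + 1) (j + (k : ZMod n)))
    (hinj : ∀ j j' : ZMod n, μ 0 j = μ 0 j' → j = j')
    (hcomm : ∀ i j : ZMod n, μ i j = μ j i)
    (hidem : ∀ i : ZMod n, μ i i = i)
    (hpent : ∀ x y : ZMod n, μ (μ (μ (μ x y) x) y) x = y) :
    ∃ c : ZMod n, 2 * c = 1 ∧ n = 11 ∧ ∀ i j : ZMod n, μ i j = c * (i + j) := by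
  have hn2 : 2 ≤ n := by omega
  haveI : NeZero n := ⟨by omega⟩
  have hiter : ∀ (a : ℕ) (i j : ZMod n), μ i j = μ (i + a) (j + a * (k : ZMod n)) := by
    intro a
    induction a with
    | zero => intro i j; simp
    | succ a ih =>
      intro i j
      rw [htr i j, ih (i+1) (j + k)]
      push_cast
      ring_nf
  have hshift : ∀ i j : ZMod n, μ i j = μ 0 (j - (k : ZMod n) * i) := by
    intro i j
    have h := hiter (-i).val i j
    rw [ZMod.natCast_val, ZMod.cast_id] at h
    rw [h]; ring_nf
  have hkneg : ((k : ZMod n)) = -1 := by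
    have h1 : μ 1 0 = μ 0 1 := hcomm 1 0
    rw [hshift 1 0, hshift 0 1] at h1
    have h2 := hinj _ _ h1
    simp at h2
    linear_combination -h2
  -- μ i j = f (i + j)
  have hsum : ∀ i j : ZMod n, μ i j = μ 0 (i + j) := by
    intro i j
    rw [hshift i j, hkneg]; ring_nf
  -- doubling: μ 0 (2*i) = i
  have hdouble : ∀ i : ZMod n, μ 0 (2 * i) = i := by
    intro i
    have h := hidem i
    rw [hsum i i] at h
    rw [two_mul]
    exact h
  -- 2 is invertible
  have h2inj : Function.Injective (fun i : ZMod n => 2 * i) := by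
    intro i j hij
    simp only at hij
    have h := congrArg (μ 0) hij
    rwa [hdouble, hdouble] at h
  obtain ⟨c, hc⟩ := (Finite.injective_iff_surjective.mp h2inj) 1
  simp only at hc
  -- f t = c * t
  have hft : ∀ t : ZMod n, μ 0 t = c * t := by
    intro t
    have h1 : (2 : ZMod n) * (c * t) = t := by linear_combination t * hc
    calc μ 0 t = μ 0 (2 * (c * t)) := by rw [h1]
      _ = c * t := hdouble _
  have hform : ∀ i j : ZMod n, μ i j = c * (i + j) := by
    intro i j; rw [hsum, hft]
  -- pentagonal at 0 1
  have hp01 := hpent 0 1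
  rw [hform, hform, hform, hform] at hp01
  have h11 : (11 : ZMod n) = 0 := by
    linear_combination (-16 : ZMod n) * hp01 + (8*c^3+4*c^2+2*c+1+4*(2*c+1)) * hc
  have hdvd : n ∣ 11 := by
    have := (ZMod.natCast_eq_zero_iff 11 n).mp (by exact_mod_cast h11)
    exact this
  rcases ((by norm_num : Nat.Prime 11).eq_one_or_self_of_dvd n hdvd) with h | h
  · omega
  · exact ⟨c, hc, h, hform⟩

private lemma partC (Q : Type) [Fintype Q] (m : Q → Q → Q)
    (hp : IsPentagonal m) (hc : ∀ x y : Q, m x y = m y x) (ht : Translatable Q m) :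
    ∃ e : Q ≃ ZMod 11, ∀ x y : Q, e (m x y) = 6 * e x + 6 * e y := by
  obtain ⟨k, e, hk1, hk2, htr⟩ := ht
  obtain ⟨c, hc2, hn11, hform⟩ :=
    auxC (Fintype.card Q) k hk1 hk2 _ htr
      (by
        intro j j' h
        replace h : e (m (e.symm 0) (e.symm j)) = e (m (e.symm 0) (e.symm j')) := h
        have h2 := e.injective h
        obtain ⟨x, _, hu⟩ := hp.1 (e.symm 0) (m (e.symm 0) (e.symm j))
        have := ((hu _ rfl).trans (hu _ h2.symm).symm)
        exact e.symm.injective this)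
      (by
        intro i j
        show e (m (e.symm i) (e.symm j)) = e (m (e.symm j) (e.symm i))
        rw [hc])
      (by
        intro i
        show e (m (e.symm i) (e.symm i)) = i
        rw [hp.2.2.1, e.apply_symm_apply])
      (by
        intro x y
        simp only [Equiv.symm_apply_apply]
        rw [hp.2.2.2.2, e.apply_symm_apply])
  have hkey : ∀ x y : Q, e (m x y) = c * (e x + e y) := by
    intro x y
    have := hform (e x) (e y)
    simpa using this
  let r : ZMod (Fintype.card Q) ≃+* ZMod 11 := ZMod.ringEquivCongr hn11
  have h2c' : 2 * r c = 1 := by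
    have h := congrArg r hc2
    rwa [map_mul, map_one, map_ofNat] at h
  have hc6 : r c = 6 := by
    have : ∀ d : ZMod 11, 2 * d = 1 → d = 6 := by decide
    exact this _ h2c'
  refine ⟨e.trans r.toEquiv, ?_⟩
  intro x y
  show r (e (m x y)) = 6 * r (e x) + 6 * r (e y)
  rw [hkey, map_mul, map_add, hc6]
  ring

lemma partD (M : ℕ) (hM : 1 < M) :
    ¬ ∃ e : (Fin M → ZMod 11) ≃ ZMod (11 ^ M),
        kTranslatable (11 ^ M) (11 ^ M - 1)
          (fun i j => e (fun t => 6 * (e.symm i) t + 6 * (e.symm j) t)) := by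
  rintro ⟨e, htr⟩
  have hnpos : 0 < 11 ^ M := Nat.pow_pos (by norm_num)
  haveI : NeZero (11 ^ M) := ⟨by omega⟩
  have hcast : ((11 ^ M - 1 : ℕ) : ZMod (11 ^ M)) = -1 := by
    rw [Nat.cast_sub (by omega : 1 ≤ 11 ^ M), ZMod.natCast_self]
    simp
  set μ : ZMod (11 ^ M) → ZMod (11 ^ M) → ZMod (11 ^ M) :=
    fun i j => e (fun t => 6 * (e.symm i) t + 6 * (e.symm j) t) with hμ
  have htr' : ∀ i j : ZMod (11 ^ M), μ i j = μ (i + 1) (j - 1) := by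
    intro i j
    have h := htr i j
    rwa [hcast, ← sub_eq_add_neg] at h
  have hiter : ∀ (a : ℕ) (i j : ZMod (11 ^ M)), μ i j = μ (i + a) (j - a) := by
    intro a
    induction a with
    | zero => intro i j; simp
    | succ a ih =>
      intro i j
      rw [htr' i j, ih (i+1) (j-1)]
      push_cast
      ring_nf
  have hsum : ∀ i j : ZMod (11 ^ M), μ i j = μ (i + j) 0 := by
    intro i j
    have h := hiter j.val i j
    rw [ZMod.natCast_val, ZMod.cast_id] at h
    rw [h]; ring_nf
  have hdec : ∀ a b a' b' : ZMod 11, 6*a+6*b = 6*a'+6*b' → a+b = a'+b' := by decide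
  have hkey : ∀ x y x' y' : Fin M → ZMod 11,
      e x + e y = e x' + e y' → x + y = x' + y' := by
    intro x y x' y' h
    have h1 : μ (e x) (e y) = μ (e x') (e y') := by
      rw [hsum (e x) (e y), hsum (e x') (e y'), h]
    simp only [hμ, Equiv.symm_apply_apply] at h1
    have h2 := e.injective h1
    funext t
    have h3 := congrFun h2 t
    simp only [Pi.add_apply]
    exact hdec _ _ _ _ h3
  have key2 : ∀ s t : ZMod (11 ^ M), e.symm (s + t) + e.symm 0 = e.symm s + e.symm t := by
    intro s t
    apply hkey
    simp
  set H : ZMod (11 ^ M) → (Fin M → ZMod 11) := fun s => e.symm s - e.symm 0 with hH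
  have hHadd : ∀ s t : ZMod (11 ^ M), H (s + t) = H s + H t := by
    intro s t
    have h := key2 s t
    simp only [hH]
    linear_combination h
  have hHinj : Function.Injective H := by
    intro s t hst
    simp only [hH] at hst
    exact e.symm.injective (sub_left_inj.mp hst)
  have hHn : ∀ a : ℕ, H ((a : ZMod (11 ^ M))) = a • H 1 := by
    intro a
    induction a with
    | zero => simp [hH]
    | succ a ih =>
      push_cast
      rw [hHadd, ih, succ_nsmul]
  have h11 : H (((11 : ℕ) : ZMod (11 ^ M))) = 0 := by
    rw [hHn]
    funext t
    show (11 : ℕ) • (H 1 t) = 0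
    rw [nsmul_eq_mul]
    have h0 : ((11 : ℕ) : ZMod 11) = 0 := by decide
    rw [h0, zero_mul]
  have h0 : H 0 = 0 := by simp [hH]
  have heq : ((11 : ℕ) : ZMod (11 ^ M)) = 0 := hHinj (by rw [h11, h0])
  have hdvd : 11 ^ M ∣ 11 := (ZMod.natCast_eq_zero_iff 11 (11 ^ M)).mp heq
  have h1 : 11 ^ M ≤ 11 := Nat.le_of_dvd (by norm_num) hdvd
  have h2 : 11 ^ 1 < 11 ^ M := Nat.pow_lt_pow_right (by norm_num) hM
  omega

theorem unique_translatable_commutative_pentagonal :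
    (IsPentagonal (fun x y : ZMod 11 => 6 * x + 6 * y) ∧
      ∀ x y : ZMod 11, 6 * x + 6 * y = 6 * y + 6 * x) ∧
    kTranslatable 11 10 (fun x y : ZMod 11 => 6 * x + 6 * y) ∧
    (∀ (Q : Type) (_ : Fintype Q) (m : Q → Q → Q),
      IsPentagonal m → (∀ x y : Q, m x y = m y x) → Translatable Q m →
      ∃ e : Q ≃ ZMod 11, ∀ x y : Q, e (m x y) = 6 * e x + 6 * e y) ∧
    (∀ m : ℕ, 1 < m →
      ¬ ∃ e : (Fin m → ZMod 11) ≃ ZMod (11 ^ m),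
        kTranslatable (11 ^ m) (11 ^ m - 1)
          (fun i j => e (fun t => 6 * (e.symm i) t + 6 * (e.symm j) t))) := by
  refine ⟨⟨?_, ?_⟩, ?_, ?_, ?_⟩
  · refine ⟨?_, ?_, ?_, ?_, ?_⟩
    · intro a b
      refine ⟨2 * b - a, ?_, ?_⟩
      · show 6 * a + 6 * (2 * b - a) = b
        revert a b; decide
      · intro y hy
        have h : 6 * a + 6 * y = b := hy
        revert h; revert a b y
        decide
    · intro a b
      refine ⟨2 * b - a, ?_, ?_⟩
      · show 6 * (2 * b - a) + 6 * a = b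
        revert a b; decide
      · intro y hy
        have h : 6 * y + 6 * a = b := hy
        revert h; revert a b y
        decide
    · intro x
      show 6 * x + 6 * x = x
      revert x; decide
    · intro x y z u
      show 6 * (6 * x + 6 * y) + 6 * (6 * z + 6 * u) = 6 * (6 * x + 6 * z) + 6 * (6 * y + 6 * u)
      ring
    · intro x y
      show 6*(6*(6*(6*x+6*y)+6*x)+6*y)+6*x = y
      revert x y; decide
  · intro x y; ring
  · intro i j
    show 6 * i + 6 * j = 6 * (i + 1) + 6 * (j + ((10 : ℕ) : ZMod 11))
    revert i j; decide
  · intro Q inst m hp hc ht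
    exact @partC Q inst m hp hc ht
  · exact partD
end

section
/- Let (Q,·) be a pentagonal quasigroup with x·y = (ax + (1−a)y) mod n, so a⁴ − a³ + a² − a + 1 ≡ 0 (mod n). Then its parastrophes satisfy: x∘₁y = ((1−a³−a)x + (a³+a)y) mod n, x∘₂y = (−a⁴x + (a⁴+1)y) mod n, x∘₃y = ((a⁴+1)x − a⁴y) mod n, x∘₄y = ((a³+a)x + (1−a−a³)y) mod n, and x∘₅y = ((1−a)x + ay) mod n. -/
/-!
Each parastrophe of the affine operation `x·y = a x + (1 - a) y` is obtained by solving this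
equation for one of its variables, so it is again affine, with coefficients involving the
inverses of `a` and `1 - a`. The quartic `a⁴ - a³ + a² - a + 1` is the tenth cyclotomic
polynomial, so `a⁵ = -1` and `a⁻¹ = -a⁴`; moreover `(1 - a)(a³ + a) = 1 - (a⁴ - a³ + a² - a + 1)`,
so `(1 - a)⁻¹ = a³ + a`.
-/

section

variable {R : Type*} [CommRing R] {a : R}

theorem pow_five_eq_neg_one_of_cyclotomic_ten (h : a ^ 4 - a ^ 3 + a ^ 2 - a + 1 = 0) :
    a ^ 5 = -1 := by
  linear_combination (a + 1) * h

theorem one_sub_mul_pow_three_add_self_of_cyclotomic_ten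
    (h : a ^ 4 - a ^ 3 + a ^ 2 - a + 1 = 0) : (1 - a) * (a ^ 3 + a) = 1 := by
  linear_combination -h

end

theorem pentagonal_parastrophes_general (n : ℕ) (a : ZMod n)
    (hpoly : a ^ 4 - a ^ 3 + a ^ 2 - a + 1 = 0)
    (m : ZMod n → ZMod n → ZMod n)
    (hm : ∀ x y : ZMod n, m x y = a * x + (1 - a) * y) :
    (∀ x y : ZMod n, m x ((1 - a ^ 3 - a) * x + (a ^ 3 + a) * y) = y) ∧
    (∀ x y : ZMod n, m (-(a ^ 4) * x + (a ^ 4 + 1) * y) y = x) ∧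
    (∀ x y : ZMod n, m ((a ^ 4 + 1) * x + -(a ^ 4) * y) x = y) ∧
    (∀ x y : ZMod n, m y ((a ^ 3 + a) * x + (1 - a - a ^ 3) * y) = x) ∧
    (∀ x y : ZMod n, m y x = (1 - a) * x + a * y) := by
  have ha5 := pow_five_eq_neg_one_of_cyclotomic_ten hpoly
  have hinv := one_sub_mul_pow_three_add_self_of_cyclotomic_ten hpoly
  refine ⟨fun x y => ?_, fun x y => ?_, fun x y => ?_, fun x y => ?_, fun x y => ?_⟩ <;>
    rw [hm]
  · linear_combination (y - x) * hinv
  · linear_combination (y - x) * ha5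
  · linear_combination (x - y) * ha5
  · linear_combination (x - y) * hinv
  · ring

theorem pentagonal_parastrophes (n : ℕ) (a : ZMod n)
    (hpoly : a ^ 4 - a ^ 3 + a ^ 2 - a + 1 = 0)
    (m : ZMod n → ZMod n → ZMod n)
    (hm : ∀ x y : ZMod n, m x y = a * x + (1 - a) * y)
    (hpq : IsPentagonal m) :
    (∀ x y : ZMod n, m x ((1 - a ^ 3 - a) * x + (a ^ 3 + a) * y) = y) ∧
    (∀ x y : ZMod n, m (-(a ^ 4) * x + (a ^ 4 + 1) * y) y = x) ∧
    (∀ x y : ZMod n, m ((a ^ 4 + 1) * x + -(a ^ 4) * y) x = y) ∧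
    (∀ x y : ZMod n, m y ((a ^ 3 + a) * x + (1 - a - a ^ 3) * y) = x) ∧
    (∀ x y : ZMod n, m y x = (1 - a) * x + a * y) :=
  pentagonal_parastrophes_general n a hpoly m hm
end
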